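/- arXiv:1504.01230 — 5 statements merged into one kernel-verified Lean document; each statement's English description precedes it below -/
import Mathlib

section
/- For every natural number n, the number of crossingless matchings of 2n points equals the n-th Catalan number; that is, the set of permutations σ of Fin (2n) which are fixed-point-free noncrossing involutions has cardinality (1/(n+1))·(2n choose n) = Nat.catalan n. -/
/-- A crossingless matching of the `m` points `0, …, m-1` (identified in order with the
labels `1, …, m`), encoded as a permutation: a fixed-point-free noncrossing involution. -/
def IsCrossinglessMatching {m : ℕ} (σ : Equiv.Perm (Fin m)) : Prop :=
  (∀ i, σ (σ i) = i) ∧ (∀ i, σ i ≠ i) ∧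
    ∀ a b : Fin m, a < b → b < σ a → σ a < σ b → False

/-- `c(σ, τ)`: the number of components of the planar unlink `σ ∪ τ̄`, i.e. the number of
orbits of the action on `Fin m` of the subgroup generated by `σ` and `τ`. -/
noncomputable def numComponents {m : ℕ} (σ τ : Equiv.Perm (Fin m)) : ℕ :=
  Nat.card (MulAction.orbitRel.Quotient
    ↥(Subgroup.closure ({σ, τ} : Set (Equiv.Perm (Fin m)))) (Fin m))

namespace CMAux

/-- ℕ-level description of a crossingless matching on `{0, …, m-1}`. -/
def P (m : ℕ) (f : ℕ → ℕ) : Prop :=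
  (∀ k, k < m → f k < m) ∧ (∀ k, m ≤ k → f k = k) ∧ (∀ k, f (f k) = k) ∧
    (∀ k, k < m → f k ≠ k) ∧
    ∀ a b, b < m → a < b → b < f a → f a < f b → False

lemma even_card_invol (g : ℕ → ℕ) (S : Finset ℕ)
    (h1 : ∀ x ∈ S, g x ∈ S) (h2 : ∀ x ∈ S, g (g x) = x) (h3 : ∀ x ∈ S, g x ≠ x) :
    Even S.card := by
  classical
  induction S using Finset.strongInduction with
  | _ S ih =>
    rcases S.eq_empty_or_nonempty with rfl | ⟨x, hx⟩
    · simp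
    · have hgx : g x ∈ S := h1 x hx
      have hne : g x ≠ x := h3 x hx
      set T := (S.erase x).erase (g x) with hT
      have hxex : g x ∈ S.erase x := Finset.mem_erase.mpr ⟨hne, hgx⟩
      have hsub : T ⊂ S := by
        refine Finset.ssubset_iff_of_subset ?_ |>.mpr ⟨x, hx, ?_⟩
        · intro y hy
          exact Finset.mem_of_mem_erase (Finset.mem_of_mem_erase hy)
        · intro hmem
          have := Finset.mem_of_mem_erase hmem
          exact (Finset.mem_erase.mp this).1 rfl
      have hTmem : ∀ y, y ∈ T → (y ∈ S ∧ y ≠ x ∧ y ≠ g x) := by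
        intro y hy
        rw [hT, Finset.mem_erase, Finset.mem_erase] at hy
        exact ⟨hy.2.2, hy.2.1, hy.1⟩
      have hT1 : ∀ y ∈ T, g y ∈ T := by
        intro y hy
        obtain ⟨hyS, hyx, hygx⟩ := hTmem y hy
        rw [hT, Finset.mem_erase, Finset.mem_erase]
        refine ⟨?_, ?_, h1 y hyS⟩
        · intro e
          apply hyx
          have := h2 x hx
          rw [← e, h2 y hyS] at this
          exact this.symm ▸ rfl
        · intro e
          apply hygx
          rw [← h2 y hyS, e]
      have hT2 : ∀ y ∈ T, g (g y) = y := fun y hy => h2 y (hTmem y hy).1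
      have hT3 : ∀ y ∈ T, g y ≠ y := fun y hy => h3 y (hTmem y hy).1
      have hcard : T.card + 2 = S.card := by
        rw [hT, Finset.card_erase_of_mem hxex, Finset.card_erase_of_mem hx]
        have h2le : 2 ≤ S.card := Finset.one_lt_card.mpr ⟨g x, hgx, x, hx, hne⟩
        omega
      obtain ⟨r, hr⟩ := ih T hsub hT1 hT2 hT3
      exact ⟨r + 1, by omega⟩

lemma ioo_closed {m : ℕ} {f : ℕ → ℕ} (hf : P m f) {a k : ℕ} (ha : a < f a)
    (h1 : a < k) (h2 : k < f a) : a < f k ∧ f k < f a := by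
  obtain ⟨hb, ho, hi, hfp, hnc⟩ := hf
  have ham : a < m := by
    by_contra h
    rw [ho a (not_lt.1 h)] at ha; omega
  have hfam : f a < m := hb a ham
  have hkm : k < m := by omega
  have hne1 : f k ≠ a := by
    intro e
    have : f (f k) = f a := by rw [e]
    rw [hi] at this; omega
  have hne2 : f k ≠ f a := by
    intro e
    have : f (f k) = f (f a) := by rw [e]
    rw [hi, hi] at this; omega
  constructor
  · by_contra hlt
    push_neg at hlt
    have hlt' : f k < a := lt_of_le_of_ne hlt hne1
    exact hnc (f k) a ham hlt' (by rw [hi]; omega) (by rw [hi]; omega)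
  · by_contra hlt
    push_neg at hlt
    have hlt' : f a < f k := lt_of_le_of_ne hlt (Ne.symm hne2)
    exact hnc a k hkm h1 h2 hlt'

lemma outer_closed {m : ℕ} {f : ℕ → ℕ} (hf : P m f) {k : ℕ} (h0 : 0 < m)
    (h1 : f 0 < k) (h2 : k < m) : f 0 < f k := by
  obtain ⟨hb, ho, hi, hfp, hnc⟩ := hf
  have hj0 : 0 < f 0 := Nat.pos_of_ne_zero fun e => hfp 0 h0 e
  have hne1 : f k ≠ f 0 := by
    intro e
    have : f (f k) = f (f 0) := by rw [e]
    rw [hi, hi] at this; omega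
  have hne2 : f k ≠ 0 := by
    intro e
    have : f (f k) = f 0 := by rw [e]
    rw [hi] at this; omega
  by_contra hlt
  push_neg at hlt
  have h3 : 0 < f k ∧ f k < f 0 := ⟨Nat.pos_of_ne_zero hne2, lt_of_le_of_ne hlt hne1⟩
  have := ioo_closed ⟨hb, ho, hi, hfp, hnc⟩ hj0 h3.1 h3.2
  rw [hi] at this
  omega

/-- Glue an inner matching on `2i` points and an outer matching on `2(n-i)` points into a
matching on `2(n+1)` points, with `0` matched to `2i+1`. -/
def glue (n i : ℕ) (f₁ f₂ : ℕ → ℕ) : ℕ → ℕ := fun k =>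
  if 2 * n + 2 ≤ k then k
  else if k = 0 then 2 * i + 1
  else if k ≤ 2 * i then f₁ (k - 1) + 1
  else if k = 2 * i + 1 then 0
  else f₂ (k - (2 * i + 2)) + (2 * i + 2)

lemma glue_big {n i : ℕ} {f₁ f₂ : ℕ → ℕ} {k : ℕ} (h : 2 * n + 2 ≤ k) :
    glue n i f₁ f₂ k = k := by
  simp only [glue]; rw [if_pos h]

lemma glue_zero {n i : ℕ} {f₁ f₂ : ℕ → ℕ} : glue n i f₁ f₂ 0 = 2 * i + 1 := by
  simp only [glue]; rw [if_neg (by omega), if_pos trivial]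

lemma glue_mid {n i : ℕ} {f₁ f₂ : ℕ → ℕ} {k : ℕ} (hi : i ≤ n) (h1 : 1 ≤ k) (h2 : k ≤ 2 * i) :
    glue n i f₁ f₂ k = f₁ (k - 1) + 1 := by
  simp only [glue]; rw [if_neg (by omega), if_neg (by omega), if_pos h2]

lemma glue_top {n i : ℕ} {f₁ f₂ : ℕ → ℕ} (hi : i ≤ n) : glue n i f₁ f₂ (2 * i + 1) = 0 := by
  simp only [glue]; rw [if_neg (by omega), if_neg (by omega), if_neg (by omega), if_pos trivial]

lemma glue_out {n i : ℕ} {f₁ f₂ : ℕ → ℕ} {k : ℕ} (h1 : 2 * i + 2 ≤ k) (h2 : k < 2 * n + 2) :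
    glue n i f₁ f₂ k = f₂ (k - (2 * i + 2)) + (2 * i + 2) := by
  simp only [glue]; rw [if_neg (by omega), if_neg (by omega), if_neg (by omega), if_neg (by omega)]

lemma P_glue {n i : ℕ} {f₁ f₂ : ℕ → ℕ} (hi : i ≤ n)
    (h₁ : P (2 * i) f₁) (h₂ : P (2 * (n - i)) f₂) : P (2 * (n + 1)) (glue n i f₁ f₂) := by
  obtain ⟨b1, o1, v1, p1, c1⟩ := h₁
  obtain ⟨b2, o2, v2, p2, c2⟩ := h₂
  refine ⟨?_, ?_, ?_, ?_, ?_⟩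
  · intro k hk
    rcases Nat.eq_zero_or_pos k with rfl | hk0
    · rw [glue_zero]; omega
    by_cases hk1 : k ≤ 2 * i
    · rw [glue_mid hi hk0 hk1]
      have := b1 (k - 1) (by omega); omega
    by_cases hk2 : k = 2 * i + 1
    · rw [hk2, glue_top hi]; omega
    · rw [glue_out (by omega) (by omega)]
      have := b2 (k - (2 * i + 2)) (by omega); omega
  · intro k hk
    exact glue_big (by omega)
  · intro k
    rcases Nat.lt_or_ge k (2 * n + 2) with hk | hk
    · rcases Nat.eq_zero_or_pos k with rfl | hk0
      · rw [glue_zero, glue_top hi]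
      by_cases hk1 : k ≤ 2 * i
      · have hb := b1 (k - 1) (by omega)
        rw [glue_mid hi hk0 hk1, glue_mid hi (by omega) (by omega), Nat.add_sub_cancel, v1]
        omega
      by_cases hk2 : k = 2 * i + 1
      · rw [hk2, glue_top hi, glue_zero]
      · have hb := b2 (k - (2 * i + 2)) (by omega)
        rw [glue_out (by omega) hk, glue_out (by omega) (by omega), Nat.add_sub_cancel, v2]
        omega
    · rw [glue_big hk, glue_big hk]
  · intro k hk e
    rcases Nat.eq_zero_or_pos k with rfl | hk0
    · rw [glue_zero] at e; omega
    by_cases hk1 : k ≤ 2 * i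
    · rw [glue_mid hi hk0 hk1] at e
      exact p1 (k - 1) (by omega) (by omega)
    by_cases hk2 : k = 2 * i + 1
    · rw [hk2, glue_top hi] at e; omega
    · rw [glue_out (by omega) (by omega)] at e
      exact p2 (k - (2 * i + 2)) (by omega) (by omega)
  · intro a b hb hab hba hgab
    rcases Nat.eq_zero_or_pos a with rfl | ha0
    · rw [glue_zero] at hba hgab
      have hb1 := b1 (b - 1) (by omega)
      rw [glue_mid hi (by omega) (by omega)] at hgab
      omega
    by_cases ha1 : a ≤ 2 * i
    · rw [glue_mid hi ha0 ha1] at hba hgab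
      have hb1 := b1 (a - 1) (by omega)
      rw [glue_mid hi (by omega) (by omega)] at hgab
      exact c1 (a - 1) (b - 1) (by omega) (by omega) (by omega) (by omega)
    by_cases ha2 : a = 2 * i + 1
    · rw [ha2, glue_top hi] at hba; omega
    · rw [glue_out (by omega) (by omega)] at hba hgab
      rw [glue_out (by omega) (by omega)] at hgab
      exact c2 (a - (2 * i + 2)) (b - (2 * i + 2)) (by omega) (by omega) (by omega) (by omega)

def toNatFun {m : ℕ} (σ : Equiv.Perm (Fin m)) : ℕ → ℕ :=
  fun k => if h : k < m then (σ ⟨k, h⟩ : ℕ) else k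

lemma P_toNatFun {m : ℕ} {σ : Equiv.Perm (Fin m)} (h : IsCrossinglessMatching σ) :
    P m (toNatFun σ) := by
  obtain ⟨h1, h2, h3⟩ := h
  refine ⟨?_, ?_, ?_, ?_, ?_⟩
  · intro k hk; simp only [toNatFun, dif_pos hk]; exact (σ ⟨k, hk⟩).isLt
  · intro k hk; simp only [toNatFun, dif_neg (not_lt.mpr hk)]
  · intro k
    by_cases hk : k < m
    · simp only [toNatFun, dif_pos hk, Fin.is_lt, dif_pos, Fin.eta]
      rw [h1 ⟨k, hk⟩]
    · simp only [toNatFun, dif_neg hk]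
  · intro k hk e
    simp only [toNatFun, dif_pos hk] at e
    exact h2 ⟨k, hk⟩ (Fin.ext e)
  · intro a b hbm hab hba hfab
    have ham : a < m := lt_trans hab hbm
    simp only [toNatFun, dif_pos ham, dif_pos hbm] at hba hfab
    exact h3 ⟨a, ham⟩ ⟨b, hbm⟩ (Fin.lt_def.mpr hab) (Fin.lt_def.mpr hba) (Fin.lt_def.mpr hfab)

def ofNatFun {m : ℕ} (f : ℕ → ℕ) (hf : P m f) : Equiv.Perm (Fin m) :=
  Function.Involutive.toPerm (fun x => ⟨f x, hf.1 x x.isLt⟩)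
    (fun x => Fin.ext (hf.2.2.1 x))

lemma ICM_ofNatFun {m : ℕ} {f : ℕ → ℕ} (hf : P m f) :
    IsCrossinglessMatching (ofNatFun f hf) := by
  refine ⟨fun i => Fin.ext (hf.2.2.1 i), fun i e => hf.2.2.2.1 i i.isLt (congrArg Fin.val e), ?_⟩
  intro a b hab hba hss
  exact hf.2.2.2.2 a b b.isLt hab hba hss

lemma card_matchings_eq (m : ℕ) :
    Nat.card {σ : Equiv.Perm (Fin m) // IsCrossinglessMatching σ} =
      Nat.card {f : ℕ → ℕ // P m f} := by
  apply Nat.card_eq_of_bijective (fun s => ⟨toNatFun s.1, P_toNatFun s.2⟩)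
  constructor
  · rintro ⟨σ, hσ⟩ ⟨τ, hτ⟩ h
    have h' : toNatFun σ = toNatFun τ := congrArg Subtype.val h
    refine Subtype.ext (Equiv.ext fun x => ?_)
    have := congrFun h' x
    simp only [toNatFun, dif_pos x.isLt, Fin.eta] at this
    exact Fin.ext this
  · rintro ⟨f, hf⟩
    refine ⟨⟨ofNatFun f hf, ICM_ofNatFun hf⟩, Subtype.ext (funext fun k => ?_)⟩
    by_cases hk : k < m
    · simp only [toNatFun, dif_pos hk]; rfl
    · simp only [toNatFun, dif_neg hk]
      exact (hf.2.1 k (not_lt.mp hk)).symm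

lemma finite_P (m : ℕ) : Finite {f : ℕ → ℕ // P m f} := by
  have := card_matchings_eq m
  exact Finite.of_surjective (fun s : {σ : Equiv.Perm (Fin m) // IsCrossinglessMatching σ} =>
    (⟨toNatFun s.1, P_toNatFun s.2⟩ : {f : ℕ → ℕ // P m f}))
    (by
      rintro ⟨f, hf⟩
      refine ⟨⟨ofNatFun f hf, ICM_ofNatFun hf⟩, Subtype.ext (funext fun k => ?_)⟩
      by_cases hk : k < m
      · simp only [toNatFun, dif_pos hk]; rfl
      · simp only [toNatFun, dif_neg hk]
        exact (hf.2.1 k (not_lt.mp hk)).symm)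

lemma card_P_zero : Nat.card {f : ℕ → ℕ // P 0 f} = 1 := by
  haveI : Unique {f : ℕ → ℕ // P 0 f} :=
    { default := ⟨id, fun k hk => absurd hk (Nat.not_lt_zero k), fun k _ => rfl,
        fun k => rfl, fun k hk => absurd hk (Nat.not_lt_zero k),
        fun a b hb => absurd hb (Nat.not_lt_zero b)⟩
      uniq := fun s => Subtype.ext (funext fun k => s.2.2.1 k (Nat.zero_le k)) }
  exact Nat.card_unique

lemma card_sigma_fin {n : ℕ} (C : Fin n → Type*) [inst : ∀ i, Fintype (C i)] :
    Nat.card (Σ i, C i) = ∑ i, Nat.card (C i) := by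
  simp [Nat.card_eq_fintype_card]

lemma card_P_succ (n : ℕ) :
    Nat.card {f : ℕ → ℕ // P (2 * (n + 1)) f} =
      ∑ i : Fin (n + 1),
        Nat.card {f : ℕ → ℕ // P (2 * (i : ℕ)) f} *
          Nat.card {f : ℕ → ℕ // P (2 * (n - (i : ℕ))) f} := by
  classical
  have key : Nat.card (Σ i : Fin (n + 1),
        {f : ℕ → ℕ // P (2 * (i : ℕ)) f} × {f : ℕ → ℕ // P (2 * (n - (i : ℕ))) f}) =
      Nat.card {f : ℕ → ℕ // P (2 * (n + 1)) f} := by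
    apply Nat.card_eq_of_bijective
      (fun x => ⟨glue n x.1 x.2.1.1 x.2.2.1,
        P_glue (Nat.lt_succ_iff.mp x.1.2) x.2.1.2 x.2.2.2⟩)
    constructor
    · rintro ⟨i, ⟨f₁, hf₁⟩, ⟨f₂, hf₂⟩⟩ ⟨j, ⟨g₁, hg₁⟩, ⟨g₂, hg₂⟩⟩ h
      have h' : glue n i f₁ f₂ = glue n j g₁ g₂ := congrArg Subtype.val h
      have hij : (i : ℕ) = (j : ℕ) := by
        have := congrFun h' 0
        rw [glue_zero, glue_zero] at this
        omega
      have hij' : i = j := Fin.ext hij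
      subst hij'
      have hin : (i : ℕ) ≤ n := Nat.lt_succ_iff.mp i.2
      have e1 : f₁ = g₁ := by
        funext k
        by_cases hk : k < 2 * (i : ℕ)
        · have := congrFun h' (k + 1)
          rw [glue_mid hin (by omega) (by omega), glue_mid hin (by omega) (by omega),
            Nat.add_sub_cancel] at this
          omega
        · rw [hf₁.2.1 k (by omega), hg₁.2.1 k (by omega)]
      have e2 : f₂ = g₂ := by
        funext k
        by_cases hk : k < 2 * (n - (i : ℕ))
        · have := congrFun h' (k + (2 * (i : ℕ) + 2))
          rw [glue_out (by omega) (by omega), glue_out (by omega) (by omega),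
            Nat.add_sub_cancel] at this
          omega
        · rw [hf₂.2.1 k (by omega), hg₂.2.1 k (by omega)]
      subst e1; subst e2
      rfl
    · rintro ⟨f, hf⟩
      obtain ⟨bf, of, vf, pf, cf⟩ := id hf
      have hj1 : f 0 < 2 * (n + 1) := bf 0 (by omega)
      have hj0 : 0 < f 0 := Nat.pos_of_ne_zero fun e => pf 0 (by omega) e
      have heven : Even (f 0 - 1) := by
        have hcard : (Finset.Ioo 0 (f 0)).card = f 0 - 1 := by
          rw [Nat.card_Ioo]; omega
        rw [← hcard]
        refine even_card_invol f _ ?_ ?_ ?_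
        · intro x hx
          simp only [Finset.mem_Ioo] at hx ⊢
          exact ioo_closed hf hj0 hx.1 hx.2
        · intro x _; exact vf x
        · intro x hx
          simp only [Finset.mem_Ioo] at hx
          exact pf x (by omega)
      obtain ⟨r, hr⟩ := heven
      have hjr : f 0 = 2 * r + 1 := by omega
      have hrn : r ≤ n := by omega
      have inner : ∀ k, k < 2 * r → 0 < f (k + 1) ∧ f (k + 1) < 2 * r + 1 := by
        intro k hk
        have := ioo_closed hf (show 0 < f 0 by omega) (show 0 < k + 1 by omega)
          (show k + 1 < f 0 by omega)
        omega
      have outer : ∀ k, k < 2 * (n - r) →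
          2 * r + 2 ≤ f (k + (2 * r + 2)) ∧ f (k + (2 * r + 2)) < 2 * (n + 1) := by
        intro k hk
        have h1 := outer_closed hf (by omega) (show f 0 < k + (2 * r + 2) by omega) (by omega)
        have h2 := bf (k + (2 * r + 2)) (by omega)
        omega
      have hP1 : P (2 * r) (fun k => if k < 2 * r then f (k + 1) - 1 else k) := by
        refine ⟨?_, ?_, ?_, ?_, ?_⟩
        · intro k hk
          simp only
          rw [if_pos hk]
          have := inner k hk; omega
        · intro k hk; simp only; rw [if_neg (by omega)]
        · intro k
          by_cases hk : k < 2 * r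
          · have h1 := inner k hk
            simp only
            rw [if_pos hk, if_pos (by omega), show f (k + 1) - 1 + 1 = f (k + 1) by omega, vf]
            omega
          · simp only; rw [if_neg hk, if_neg hk]
        · intro k hk e
          simp only at e
          rw [if_pos hk] at e
          have := inner k hk
          exact pf (k + 1) (by omega) (by omega)
        · intro a b hb hab hba hfab
          simp only at hba hfab
          rw [if_pos (by omega)] at hba hfab
          rw [if_pos hb] at hfab
          have ia := inner a (by omega)
          have ib := inner b hb
          exact cf (a + 1) (b + 1) (by omega) (by omega) (by omega) (by omega)
      have hP2 : P (2 * (n - r))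
          (fun k => if k < 2 * (n - r) then f (k + (2 * r + 2)) - (2 * r + 2) else k) := by
        refine ⟨?_, ?_, ?_, ?_, ?_⟩
        · intro k hk
          simp only
          rw [if_pos hk]
          have := outer k hk; omega
        · intro k hk; simp only; rw [if_neg (by omega)]
        · intro k
          by_cases hk : k < 2 * (n - r)
          · have h1 := outer k hk
            simp only
            rw [if_pos hk, if_pos (by omega),
              show f (k + (2 * r + 2)) - (2 * r + 2) + (2 * r + 2) = f (k + (2 * r + 2)) by omega,
              vf]
            omega
          · simp only; rw [if_neg hk, if_neg hk]
        · intro k hk e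
          simp only at e
          rw [if_pos hk] at e
          have := outer k hk
          exact pf (k + (2 * r + 2)) (by omega) (by omega)
        · intro a b hb hab hba hfab
          simp only at hba hfab
          rw [if_pos (by omega)] at hba hfab
          rw [if_pos hb] at hfab
          have ia := outer a (by omega)
          have ib := outer b hb
          exact cf (a + (2 * r + 2)) (b + (2 * r + 2)) (by omega) (by omega) (by omega) (by omega)
      refine ⟨⟨⟨r, by omega⟩, ⟨_, hP1⟩, ⟨_, hP2⟩⟩, Subtype.ext (funext fun k => ?_)⟩
      show glue n r _ _ k = f k
      rcases Nat.lt_or_ge k (2 * (n + 1)) with hk | hk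
      · rcases Nat.eq_zero_or_pos k with rfl | hk0
        · rw [glue_zero]; omega
        by_cases hk1 : k ≤ 2 * r
        · rw [glue_mid hrn hk0 hk1]
          simp only
          rw [if_pos (by omega), show k - 1 + 1 = k by omega]
          have := inner (k - 1) (by omega)
          rw [show k - 1 + 1 = k by omega] at this
          omega
        by_cases hk2 : k = 2 * r + 1
        · rw [hk2, glue_top hrn, ← hjr, vf]
        · rw [glue_out (by omega) (by omega)]
          simp only
          rw [if_pos (by omega), show k - (2 * r + 2) + (2 * r + 2) = k by omega]
          have := outer (k - (2 * r + 2)) (by omega)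
          rw [show k - (2 * r + 2) + (2 * r + 2) = k by omega] at this
          omega
      · rw [glue_big (by omega), of k (by omega)]
  rw [← key]
  haveI : ∀ i : Fin (n + 1),
      Fintype ({f : ℕ → ℕ // P (2 * (i : ℕ)) f} × {f : ℕ → ℕ // P (2 * (n - (i : ℕ))) f}) :=
    fun i => by
      haveI := finite_P (2 * (i : ℕ))
      haveI := finite_P (2 * (n - (i : ℕ)))
      exact Fintype.ofFinite _
  rw [card_sigma_fin]
  exact Finset.sum_congr rfl fun i _ => Nat.card_prod _ _

lemma card_P_eq_catalan (n : ℕ) : Nat.card {f : ℕ → ℕ // P (2 * n) f} = catalan n := by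
  induction n using Nat.strong_induction_on with
  | _ n ih =>
    cases n with
    | zero => simpa using card_P_zero
    | succ n =>
      rw [card_P_succ n, catalan_succ]
      refine Finset.sum_congr rfl fun i _ => ?_
      rw [ih _ i.isLt, ih (n - (i : ℕ)) (by omega)]

end CMAux

/-- The number of crossingless matchings of `2n` points is the `n`-th Catalan number
`(1/(n+1))·(2n choose n)`. -/
theorem card_crossinglessMatchings_eq_catalan (n : ℕ) :
    Nat.card {σ : Equiv.Perm (Fin (2 * n)) // IsCrossinglessMatching σ} = catalan n ∧
      (n + 1) * catalan n = Nat.choose (2 * n) n := by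
  constructor
  · rw [CMAux.card_matchings_eq (2 * n)]
    exact CMAux.card_P_eq_catalan n
  · exact (succ_mul_catalan_eq_centralBinom n).trans (Nat.centralBinom_eq_two_mul_choose n)
end

section
/- Let σ and τ be crossingless matchings of 2n points with n ≥ 1. Then 1 ≤ c(σ, τ) ≤ n, and σ and τ meet in codimension zero (i.e. c(σ, τ) = n) if and only if σ = τ. -/
theorem pair_aux {α : Type*} {a b x u v : α} (hab : a ≠ b)
    (hx : x = a ∨ x = b) (hu : u = a ∨ u = b) (hv : v = a ∨ v = b)
    (hune : u ≠ x) (hvne : v ≠ x) : u = v := by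
  rcases hx with rfl | rfl <;> rcases hu with rfl | rfl <;> rcases hv with rfl | rfl <;> tauto

/-- For crossingless matchings `σ, τ` of `2n` points (`n ≥ 1`), `1 ≤ c(σ,τ) ≤ n`, and
`σ` and `τ` meet in codimension zero (`c(σ,τ) = n`) if and only if `σ = τ`. -/
theorem numComponents_bounds_and_codim_zero {n : ℕ} (hn : 1 ≤ n)
    (σ τ : Equiv.Perm (Fin (2 * n)))
    (hσ : IsCrossinglessMatching σ) (hτ : IsCrossinglessMatching τ) :
    1 ≤ numComponents σ τ ∧ numComponents σ τ ≤ n ∧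
      (numComponents σ τ = n ↔ σ = τ) := by
  set G := Subgroup.closure ({σ, τ} : Set (Equiv.Perm (Fin (2 * n)))) with hG
  have hσG : σ ∈ G := Subgroup.subset_closure (by simp)
  have hτG : τ ∈ G := Subgroup.subset_closure (by simp)
  haveI : Nonempty (Fin (2 * n)) := ⟨⟨0, by omega⟩⟩
  set Ω := MulAction.orbitRel.Quotient ↥G (Fin (2 * n)) with hΩ
  letI : Fintype Ω := Fintype.ofFinite _
  -- membership of σ x and τ x in orbits
  have hmem : ∀ (g : Equiv.Perm (Fin (2 * n))) (hg : g ∈ G) (x : Fin (2 * n)),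
      g x ∈ MulAction.orbit ↥G x := fun g hg x => ⟨⟨g, hg⟩, rfl⟩
  -- each orbit has cardinality ≥ 2
  have horb_fin : ∀ ω : Ω, (MulAction.orbitRel.Quotient.orbit ω).Finite :=
    fun ω => Set.toFinite _
  have h2 : ∀ ω : Ω, 2 ≤ Nat.card (MulAction.orbitRel.Quotient.orbit ω) := by
    intro ω
    induction ω using Quotient.inductionOn' with
    | h x =>
      rw [Nat.card_coe_set_eq, MulAction.orbitRel.Quotient.orbit_mk]
      have : 1 < (MulAction.orbit ↥G x).ncard := by
        rw [Set.one_lt_ncard_iff (Set.toFinite _)]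
        exact ⟨x, σ x, MulAction.mem_orbit_self x, hmem σ hσG x, (hσ.2.1 x).symm⟩
      omega
  -- total count
  letI : ∀ ω : Ω, Fintype (MulAction.orbitRel.Quotient.orbit ω) :=
    fun ω => Fintype.ofFinite _
  have htotal : ∑ ω : Ω, Nat.card (MulAction.orbitRel.Quotient.orbit ω) = 2 * n := by
    have := Nat.card_congr (MulAction.selfEquivSigmaOrbits' ↥G (Fin (2 * n)))
    rw [Nat.card_eq_fintype_card, Nat.card_eq_fintype_card, Fintype.card_fin,
      Fintype.card_sigma] at this
    simp only [Nat.card_eq_fintype_card]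
    exact this.symm
  have hcard : numComponents σ τ = Fintype.card Ω := by
    rw [numComponents, Nat.card_eq_fintype_card]
  -- upper bound
  have hub : numComponents σ τ ≤ n := by
    have : 2 * Fintype.card Ω ≤ 2 * n := by
      calc 2 * Fintype.card Ω = ∑ _ω : Ω, 2 := by
            rw [Finset.sum_const, Finset.card_univ, smul_eq_mul, mul_comm]
        _ ≤ ∑ ω : Ω, Nat.card (MulAction.orbitRel.Quotient.orbit ω) :=
            Finset.sum_le_sum fun ω _ => h2 ω
        _ = 2 * n := htotal
    omega
  haveI : Nonempty Ω := (‹Nonempty (Fin (2 * n))›).map Quotient.mk''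
  have hlb : 1 ≤ numComponents σ τ := by
    rw [hcard]
    exact Fintype.card_pos
  refine ⟨hlb, hub, ?_, ?_⟩
  · -- numComponents = n → σ = τ
    intro hc
    have hall : ∀ ω : Ω, Nat.card (MulAction.orbitRel.Quotient.orbit ω) = 2 := by
      intro ω
      have hsum2 : ∑ _ω : Ω, 2 = ∑ ω : Ω, Nat.card (MulAction.orbitRel.Quotient.orbit ω) := by
        rw [htotal, Finset.sum_const, Finset.card_univ, smul_eq_mul, ← hcard, hc, mul_comm]
      have := (Finset.sum_eq_sum_iff_of_le (fun ω _ => h2 ω)).mp hsum2 ω (Finset.mem_univ ω)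
      omega
    refine Equiv.ext fun x => ?_
    have h := hall (Quotient.mk'' x)
    rw [Nat.card_coe_set_eq, MulAction.orbitRel.Quotient.orbit_mk, Set.ncard_eq_two] at h
    obtain ⟨a, b, hab, hset⟩ := h
    have hx : x ∈ ({a, b} : Set (Fin (2 * n))) := hset ▸ MulAction.mem_orbit_self x
    have hσx : σ x ∈ ({a, b} : Set (Fin (2 * n))) := hset ▸ hmem σ hσG x
    have hτx : τ x ∈ ({a, b} : Set (Fin (2 * n))) := hset ▸ hmem τ hτG x
    have hσne : σ x ≠ x := hσ.2.1 x
    have hτne : τ x ≠ x := hτ.2.1 x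
    simp only [Set.mem_insert_iff, Set.mem_singleton_iff] at hx hσx hτx
    exact pair_aux hab hx hσx hτx hσne hτne
  · -- σ = τ → numComponents = n
    rintro rfl
    -- the subgroup {1, σ}
    have hσ2 : σ * σ = 1 := Equiv.ext fun i => by
      simpa using hσ.1 i
    have hσinv : σ⁻¹ = σ := by
      rw [inv_eq_iff_mul_eq_one, hσ2]
    set H : Subgroup (Equiv.Perm (Fin (2 * n))) :=
      { carrier := {1, σ}
        mul_mem' := by
          rintro a b (rfl | rfl) (rfl | rfl) <;>
            simp [hσ2]
        one_mem' := Or.inl rfl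
        inv_mem' := by
          rintro a (rfl | rfl) <;> simp [hσinv] } with hH
    have hGH : G ≤ H := by
      rw [hG]
      refine (Subgroup.closure_le H).mpr ?_
      intro g hg
      rcases hg with rfl | hg
      · exact Or.inr rfl
      · rcases hg with rfl; exact Or.inr rfl
    have horbit : ∀ x : Fin (2 * n), MulAction.orbit ↥G x = {x, σ x} := by
      intro x
      apply Set.eq_of_subset_of_subset
      · rintro y ⟨g, rfl⟩
        rcases hGH g.2 with h | h
        · left
          show (g : Equiv.Perm (Fin (2 * n))) x = x
          rw [h]; simp
        · right
          show (g : Equiv.Perm (Fin (2 * n))) x = σ x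
          rw [h]
      · rintro y (h | h)
        · rw [h]; exact MulAction.mem_orbit_self x
        · rw [h]; exact hmem σ hσG x
    have hall : ∀ ω : Ω, Nat.card (MulAction.orbitRel.Quotient.orbit ω) = 2 := by
      intro ω
      induction ω using Quotient.inductionOn' with
      | h x =>
        rw [Nat.card_coe_set_eq, MulAction.orbitRel.Quotient.orbit_mk, horbit x,
          Set.ncard_pair (hσ.2.1 x).symm]
    have : ∑ ω : Ω, Nat.card (MulAction.orbitRel.Quotient.orbit ω) = 2 * Fintype.card Ω := by
      rw [Finset.sum_congr rfl fun ω _ => hall ω, Finset.sum_const, Finset.card_univ,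
        smul_eq_mul, mul_comm]
    rw [htotal] at this
    omega
end

section
/- Let σ and τ be crossingless matchings of 2n points with n ≥ 2. Then σ and τ meet in codimension one (i.e. c(σ, τ) = n − 1) if and only if σ and τ share exactly n − 2 arcs; equivalently, if and only if the set {i : σ i = τ i} has exactly 2n − 4 elements. -/
/-- The arcs of a matching `σ`: the unordered pairs `{i, σ i}`. -/
def arcs {m : ℕ} (σ : Equiv.Perm (Fin m)) : Finset (Sym2 (Fin m)) :=
  Finset.image (fun i => s(i, σ i)) Finset.univ

/-! Every orbit of `⟨σ, τ⟩` is `σ`-invariant, hence has even size `≥ 2`, and it has size `2`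
exactly when it is an arc shared by `σ` and `τ`, i.e. when `σ` and `τ` agree on it. If `k` arcs
are shared, the remaining `2n - 2k` points fall into orbits of size `≥ 4`, so there are `n - 1`
orbits iff exactly one orbit is left over, iff `k = n - 2`. -/

open Equiv Function Finset MulAction
open scoped Pointwise

theorem Equiv.Perm.even_card_of_involutive_of_forall_ne {α : Type*} [Fintype α] [DecidableEq α]
    {σ : Perm α} (hσ : Involutive σ) (hσ' : ∀ x, σ x ≠ x) : Even (Fintype.card α) := by
  have hsq : σ ^ 2 ^ 1 = 1 := Equiv.ext hσ
  have hsupp : σ.supportᶜ = ∅ := by simpa [Finset.eq_empty_iff_forall_notMem] using hσ'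
  have hmod := Perm.card_compl_support_modEq (p := 2) hsq
  rw [hsupp, card_empty] at hmod
  exact Nat.even_iff.mpr hmod.symm

theorem Finset.card_eq_sub_one_iff_card_filter_eq_two {ι : Type*} {s : Finset ι} {f : ι → ℕ}
    {n : ℕ} (heven : ∀ i ∈ s, Even (f i)) (hne : ∀ i ∈ s, f i ≠ 0) (hsum : ∑ i ∈ s, f i = 2 * n) :
    #s = n - 1 ↔ #{i ∈ s | f i = 2} = n - 2 := by
  set small := s.filter (f · = 2)
  set large := s.filter (f · ≠ 2)
  have hcard : #small + #large = #s := card_filter_add_card_filter_not _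
  have hsmall : ∑ i ∈ small, f i = #small * 2 := sum_const_nat fun i hi => (mem_filter.1 hi).2
  have hsplit : ∑ i ∈ small, f i + ∑ i ∈ large, f i = 2 * n := by
    rw [sum_filter_add_sum_filter_not, hsum]
  have hlarge : #large * 4 ≤ ∑ i ∈ large, f i := by
    rw [← smul_eq_mul]
    refine card_nsmul_le_sum _ _ _ fun i hi => ?_
    obtain ⟨his, hi2⟩ := mem_filter.1 hi
    obtain ⟨k, hk⟩ := heven i his
    have := hne i his
    omega
  have hempty : #large = 0 → ∑ i ∈ large, f i = 0 := fun h => by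
    rw [card_eq_zero.1 h, sum_empty]
  omega

section Fibers

variable {α β : Type*} [Fintype α] [DecidableEq α] [DecidableEq β] {π : α → β} {σ : Perm α}

theorem even_card_fiber_of_involutive (hσ : Involutive σ) (hσ' : ∀ x, σ x ≠ x)
    (hπσ : ∀ x, π (σ x) = π x) (b : β) : Even #{x | π x = b} := by
  rw [← Fintype.card_subtype]
  exact Perm.even_card_of_involutive_of_forall_ne (σ := σ.subtypePerm fun x => by rw [hπσ])
    (fun x => Subtype.ext (hσ x)) fun x h => hσ' x (congrArg Subtype.val h)

theorem card_eq_sub_one_iff_card_filter_card_fiber_eq_two [Fintype β] (hπ : Surjective π)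
    (hσ : Involutive σ) (hσ' : ∀ x, σ x ≠ x) (hπσ : ∀ x, π (σ x) = π x) {n : ℕ}
    (hα : Fintype.card α = 2 * n) :
    Fintype.card β = n - 1 ↔ #{x | #{y | π y = π x} = 2} = 2 * n - 4 := by
  have hsum : ∑ b, #{x | π x = b} = 2 * n := by
    rw [← hα, ← card_univ, card_eq_sum_card_fiberwise fun x _ => mem_univ (π x)]
  have hpairs : #{x | #{y | π y = π x} = 2} = #{b | #{x | π x = b} = 2} * 2 := by
    set t : Finset β := {b | #{x | π x = b} = 2}
    calc #{x | #{y | π y = π x} = 2} = #{x | π x ∈ t} := by simp [t]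
      _ = ∑ b ∈ t, #{x | π x = b} := (sum_card_fiberwise_eq_card_filter _ _ _).symm
      _ = #t * 2 := sum_const_nat fun b hb => (mem_filter.1 hb).2
  rw [← card_univ, card_eq_sub_one_iff_card_filter_eq_two
    (fun b _ => even_card_fiber_of_involutive hσ hσ' hπσ b)
    (fun b _ => by obtain ⟨x, rfl⟩ := hπ b; exact (card_pos.2 ⟨x, by simp⟩).ne') hsum, hpairs]
  omega

end Fibers

section Orbits

variable {α : Type*} {σ τ : Perm α}

theorem apply_mem_orbit_closure {S : Set (Perm α)} {g : Perm α} (hg : g ∈ S) (x : α) :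
    g x ∈ orbit (Subgroup.closure S) x :=
  mem_orbit x (⟨g, Subgroup.subset_closure hg⟩ : Subgroup.closure S)

theorem pair_subset_orbit_closure_pair (x : α) :
    {x, σ x} ⊆ orbit (Subgroup.closure {σ, τ}) x :=
  Set.pair_subset (mem_orbit_self x) (apply_mem_orbit_closure (Set.mem_insert σ {τ}) x)

theorem orbit_closure_pair_eq_pair (hσ : Involutive σ) (hτ : Involutive τ) {x : α}
    (hx : σ x = τ x) : orbit (Subgroup.closure {σ, τ}) x = {x, σ x} := by
  refine (pair_subset_orbit_closure_pair x).antisymm' ?_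
  have hstab : Subgroup.closure {σ, τ} ≤ stabilizer (Perm α) ({x, σ x} : Set α) := by
    rw [Subgroup.closure_le, Set.pair_subset_iff]
    constructor
    · simp [Set.smul_set_insert, hσ x, Set.pair_comm]
    · simp [Set.smul_set_insert, hτ x, hx, Set.pair_comm]
  rintro _ ⟨g, rfl⟩
  rw [← mem_stabilizer_iff.1 (hstab g.2)]
  exact Set.smul_mem_smul_set (Set.mem_insert x _)

theorem apply_eq_apply_iff_ncard_orbit_eq_two [Finite α] (hσ : Involutive σ)
    (hσ' : ∀ x, σ x ≠ x) (hτ : Involutive τ) (hτ' : ∀ x, τ x ≠ x) {x : α} :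
    σ x = τ x ↔ (orbit (Subgroup.closure {σ, τ}) x).ncard = 2 := by
  refine ⟨fun hx => by rw [orbit_closure_pair_eq_pair hσ hτ hx, Set.ncard_pair (hσ' x).symm],
    fun h => ?_⟩
  have hpair := Set.eq_of_subset_of_ncard_le (pair_subset_orbit_closure_pair x)
    (by rw [h, Set.ncard_pair (hσ' x).symm])
  have hτx : τ x ∈ orbit (Subgroup.closure {σ, τ}) x :=
    apply_mem_orbit_closure (Set.mem_insert_of_mem σ (Set.mem_singleton τ)) x
  rw [← hpair] at hτx
  exact (hτx.resolve_left (hτ' x)).symm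

theorem card_orbitRel_quotient_closure_pair_eq_sub_one_iff [Fintype α] [DecidableEq α]
    (hσ : Involutive σ) (hσ' : ∀ x, σ x ≠ x) (hτ : Involutive τ) (hτ' : ∀ x, τ x ≠ x) {n : ℕ}
    (hα : Fintype.card α = 2 * n) :
    Nat.card (orbitRel.Quotient (Subgroup.closure {σ, τ}) α) = n - 1 ↔
      #{x | σ x = τ x} = 2 * n - 4 := by
  classical
  have hσ_orbitRel (x : α) : orbitRel (Subgroup.closure {σ, τ}) α (σ x) x :=
    orbitRel_apply.2 (apply_mem_orbit_closure (Set.mem_insert σ {τ}) x)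
  rw [Nat.card_eq_fintype_card, card_eq_sub_one_iff_card_filter_card_fiber_eq_two
    Quotient.mk''_surjective hσ hσ' (fun x => Quotient.sound' (hσ_orbitRel x)) hα]
  congr! 2
  ext x
  rw [mem_filter, mem_filter, apply_eq_apply_iff_ncard_orbit_eq_two hσ hσ' hτ hτ',
    ← Set.ncard_coe_finset]
  congr! 3
  ext y
  simp [Quotient.eq'', orbitRel_apply]

end Orbits

theorem Function.Involutive.mk_apply_eq_mk_apply_iff {α : Type*} {f : α → α} (hf : Involutive f)
    {x y : α} : s(x, f x) = s(y, f y) ↔ x = y ∨ x = f y := by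
  rw [Sym2.eq_iff]
  constructor
  · rintro (⟨h, -⟩ | ⟨h, -⟩) <;> simp [h]
  · rintro (rfl | rfl)
    · exact Or.inl ⟨rfl, rfl⟩
    · exact Or.inr ⟨rfl, hf y⟩

section Arcs

variable {m : ℕ} {σ τ : Perm (Fin m)}

theorem mk_mem_arcs_iff (hσ : Involutive σ) {a b : Fin m} : s(a, b) ∈ arcs σ ↔ σ a = b := by
  simp only [arcs, mem_image, mem_univ, true_and, Sym2.eq_iff]
  constructor
  · rintro ⟨i, ⟨rfl, rfl⟩ | ⟨rfl, rfl⟩⟩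
    exacts [rfl, hσ i]
  · exact fun h => ⟨a, Or.inl ⟨rfl, h⟩⟩

theorem image_filter_apply_eq_apply (hσ : Involutive σ) (hτ : Involutive τ) :
    image (fun x => s(x, σ x)) {x | σ x = τ x} = arcs σ ∩ arcs τ := by
  ext z
  simp only [mem_image, mem_filter, mem_univ, true_and, mem_inter]
  constructor
  · rintro ⟨x, hx, rfl⟩
    exact ⟨(mk_mem_arcs_iff hσ).2 rfl, (mk_mem_arcs_iff hτ).2 hx.symm⟩
  · rintro ⟨hzσ, hzτ⟩
    obtain ⟨x, -, rfl⟩ := mem_image.1 hzσ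
    exact ⟨x, ((mk_mem_arcs_iff hτ).1 hzτ).symm, rfl⟩

theorem card_filter_apply_eq_apply_eq_two_mul_card_inter_arcs (hσ : Involutive σ)
    (hσ' : ∀ x, σ x ≠ x) (hτ : Involutive τ) : #{x | σ x = τ x} = 2 * #(arcs σ ∩ arcs τ) := by
  rw [card_eq_sum_card_image (fun x => s(x, σ x)), sum_const_nat (m := 2),
    image_filter_apply_eq_apply hσ hτ, mul_comm]
  intro z hz
  obtain ⟨j, hj, rfl⟩ := mem_image.1 hz
  have hσj : σ (σ j) = τ (σ j) := by
    rw [hσ, (mem_filter.1 hj).2, hτ]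
  have hfiber : ({x ∈ {x | σ x = τ x} | s(x, σ x) = s(j, σ j)} : Finset (Fin m)) = {j, σ j} := by
    ext x
    simp only [mem_filter, mem_univ, true_and, hσ.mk_apply_eq_mk_apply_iff, mem_insert,
      mem_singleton]
    refine ⟨And.right, ?_⟩
    rintro (rfl | rfl)
    exacts [⟨(mem_filter.1 hj).2, Or.inl rfl⟩, ⟨hσj, Or.inr rfl⟩]
  rw [hfiber, card_pair (hσ' j).symm]

end Arcs

theorem numComponents_eq_sub_one_iff_general {n : ℕ}
    (σ τ : Equiv.Perm (Fin (2 * n)))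
    (hσ : IsCrossinglessMatching σ) (hτ : IsCrossinglessMatching τ) :
    (numComponents σ τ = n - 1 ↔ (arcs σ ∩ arcs τ).card = n - 2) ∧
      (numComponents σ τ = n - 1 ↔
        (Finset.univ.filter fun i => σ i = τ i).card = 2 * n - 4) := by
  obtain ⟨hσi, hσ', -⟩ := hσ
  obtain ⟨hτi, hτ', -⟩ := hτ
  have hcomponents : numComponents σ τ = n - 1 ↔ #{x | σ x = τ x} = 2 * n - 4 :=
    card_orbitRel_quotient_closure_pair_eq_sub_one_iff hσi hσ' hτi hτ' (Fintype.card_fin _)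
  have harcs := card_filter_apply_eq_apply_eq_two_mul_card_inter_arcs hσi hσ' hτi
  exact ⟨hcomponents.trans (by omega), hcomponents⟩

/-- For crossingless matchings `σ, τ` of `2n` points (`n ≥ 2`), `σ` and `τ` meet in
codimension one (`c(σ,τ) = n - 1`) iff they share exactly `n - 2` arcs, equivalently iff
`{i : σ i = τ i}` has exactly `2n - 4` elements. -/
theorem numComponents_eq_sub_one_iff {n : ℕ} (hn : 2 ≤ n)
    (σ τ : Equiv.Perm (Fin (2 * n)))
    (hσ : IsCrossinglessMatching σ) (hτ : IsCrossinglessMatching τ) :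
    (numComponents σ τ = n - 1 ↔ (arcs σ ∩ arcs τ).card = n - 2) ∧
      (numComponents σ τ = n - 1 ↔
        (Finset.univ.filter fun i => σ i = τ i).card = 2 * n - 4) :=
  numComponents_eq_sub_one_iff_general σ τ hσ hτ
end

section
/- Let σ and σ' be crossingless matchings of 2n points which meet in codimension one, i.e. c(σ, σ') = n − 1. Then for every crossingless matching τ of 2n points, the codimension of intersection changes by exactly one: either c(σ, τ) = c(σ', τ) + 1 or c(σ', τ) = c(σ, τ) + 1. -/
/-!
A crossingless matching joins points of opposite parity (the points under an arc are matched
among themselves), so the product `σ * τ` of two of them preserves parity, and every orbit of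
`⟨σ, τ⟩`, an alternating cycle of `σ`- and `τ`-arcs, is the union of exactly two cycles of
`σ * τ`: its even points and its odd points. Hence `c(σ, τ)` is the number of cycles of `σ * τ`
on the `n` even points. For `(σ', σ)` in codimension one this says that `σ' * σ` has `n - 1`
cycles on `n` points, i.e. it is a transposition there. So on the even points
`σ' * τ = (σ' * σ) * (σ * τ)` differs from `σ * τ` by a transposition, and multiplying a
permutation by a transposition merges two cycles or splits one.
-/

namespace Equiv.Perm

variable {α : Type*} {π : Perm α} {a b x y : α}

theorem sameCycle_iff_pow_apply_eq_of_first_hit [Finite α] (hab : a ≠ b) {k : ℕ} (hk : 0 < k)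
    (hhit : (π ^ k) a = a ∨ (π ^ k) a = b)
    (hmiss : ∀ j, 0 < j → j < k → (π ^ j) a ≠ a ∧ (π ^ j) a ≠ b) :
    π.SameCycle a b ↔ (π ^ k) a = b := by
  refine ⟨fun h => hhit.resolve_left fun hret => ?_, fun h => ⟨k, by rwa [zpow_natCast]⟩⟩
  obtain ⟨i, hi⟩ := h.exists_nat_pow_eq
  have hper : Function.IsPeriodicPt π k a := hret
  have hmod : (π ^ (i % k)) a = b := by rw [← hi, ← iterate_eq_pow, hper.iterate_mod_apply]; rfl
  rcases Nat.eq_zero_or_pos (i % k) with h0 | hpos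
  · rw [h0, pow_zero] at hmod
    exact hab hmod
  · exact (hmiss _ hpos (Nat.mod_lt _ hk)).2 hmod

/-- Up to the first return of the `π`-orbit of `a` to `{a, b}`, the permutations `π` and
`swap a b * π` agree; at that return they land on different points of `{a, b}`. -/
theorem sameCycle_swap_mul_iff [Finite α] [DecidableEq α] (hab : a ≠ b) :
    (swap a b * π).SameCycle a b ↔ ¬ π.SameCycle a b := by
  classical
  have hex : ∃ k, 0 < k ∧ ((π ^ k) a = a ∨ (π ^ k) a = b) :=
    ⟨orderOf π, orderOf_pos π, Or.inl (by rw [pow_orderOf_eq_one]; rfl)⟩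
  obtain ⟨hk, hhit⟩ := Nat.find_spec hex
  have hmiss : ∀ j, 0 < j → j < Nat.find hex → (π ^ j) a ≠ a ∧ (π ^ j) a ≠ b :=
    fun j hj hjk => by
      have := Nat.find_min hex hjk
      tauto
  have hagree : ∀ j < Nat.find hex, ((swap a b * π) ^ j) a = (π ^ j) a := by
    intro j
    induction j with
    | zero => simp
    | succ j ih =>
      intro hj
      rw [pow_succ', mul_apply, ih (by omega), mul_apply, ← mul_apply π, ← pow_succ']
      exact swap_apply_of_ne_of_ne (hmiss _ j.succ_pos hj).1 (hmiss _ j.succ_pos hj).2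
  have hlast : ((swap a b * π) ^ Nat.find hex) a = swap a b ((π ^ Nat.find hex) a) := by
    obtain ⟨j, hj⟩ : ∃ j, Nat.find hex = j + 1 := ⟨_, (Nat.succ_pred_eq_of_pos hk).symm⟩
    rw [hj, pow_succ', mul_apply, hagree j (by omega), mul_apply, ← mul_apply π, ← pow_succ']
  rw [sameCycle_iff_pow_apply_eq_of_first_hit hab hk hhit hmiss,
    sameCycle_iff_pow_apply_eq_of_first_hit hab hk, hlast]
  · rcases hhit with h | h <;> simp [h, hab]
  · rw [hlast]
    rcases hhit with h | h <;> simp [h]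
  · intro j hj hjk
    rw [hagree j hjk]
    exact hmiss j hj hjk

theorem SameCycle.mem_of_mapsTo [Finite α] {S : Set α} (hS : Set.MapsTo π S S)
    (h : π.SameCycle x y) (hx : x ∈ S) : y ∈ S := by
  obtain ⟨i, rfl⟩ := h.exists_nat_pow_eq
  exact hS.iterate i hx

theorem mapsTo_swap_mul [DecidableEq α] {S : Set α} (hS : Set.MapsTo π S S)
    (hab : a ∈ S ↔ b ∈ S) : Set.MapsTo (swap a b * π) S S := by
  intro z hz
  have hπz := hS hz
  rw [mul_apply, swap_apply_def]
  split_ifs with ha hb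
  · exact hab.1 (ha ▸ hπz)
  · exact hab.2 (hb ▸ hπz)
  · exact hπz

theorem SameCycle.swap_mul [Finite α] [DecidableEq α] (hab : (swap a b * π).SameCycle a b)
    (h : π.SameCycle x y) : (swap a b * π).SameCycle x y := by
  have hS := mapsTo_swap_mul (S := {z | (swap a b * π).SameCycle x z}) (a := a) (b := b)
    (fun z hz => sameCycle_apply_right.2 hz) ⟨fun h => h.trans hab, fun h => h.trans hab.symm⟩
  rw [swap_mul_self_mul] at hS
  exact h.mem_of_mapsTo (S := {z | (swap a b * π).SameCycle x z}) hS (SameCycle.refl _ x)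

theorem SameCycle.of_swap_mul [Finite α] [DecidableEq α] (h : (swap a b * π).SameCycle x y) :
    π.SameCycle x y ∨
      (π.SameCycle x a ∨ π.SameCycle x b) ∧ (π.SameCycle y a ∨ π.SameCycle y b) := by
  by_cases hx : π.SameCycle x a ∨ π.SameCycle x b
  · refine Or.inr ⟨hx, h.mem_of_mapsTo (S := {z | π.SameCycle z a ∨ π.SameCycle z b}) ?_ hx⟩
    refine mapsTo_swap_mul (fun z hz => ?_) ?_
    · simpa only [Set.mem_ofPred_eq, sameCycle_apply_left] using hz
    · simp [SameCycle.refl]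
  · refine Or.inl (h.mem_of_mapsTo (S := {z | π.SameCycle x z}) ?_ (SameCycle.refl _ x))
    refine mapsTo_swap_mul (fun z hz => sameCycle_apply_right.2 hz) ?_
    simp only [Set.mem_ofPred_eq]
    tauto

/-- Fixed points count as cycles. -/
noncomputable def cycleCount (π : Perm α) : ℕ := Nat.card (Quotient (SameCycle.setoid π))

theorem cycleCount_swap_mul_add_one [Finite α] [DecidableEq α] (hab : a ≠ b)
    (h : ¬ π.SameCycle a b) : cycleCount (swap a b * π) + 1 = cycleCount π := by
  classical
  have hab' : (swap a b * π).SameCycle a b := (sameCycle_swap_mul_iff hab).2 h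
  let F : {q : Quotient (SameCycle.setoid π) // q ≠ ⟦b⟧} →
      Quotient (SameCycle.setoid (swap a b * π)) :=
    fun q => Quotient.map id (fun _ _ => SameCycle.swap_mul hab') q.1
  have hF : F.Bijective := by
    constructor
    · rintro ⟨⟨x⟩, hx⟩ ⟨⟨y⟩, hy⟩ hxy
      replace hx : ¬ π.SameCycle x b := fun hxb => hx (Quotient.sound hxb)
      replace hy : ¬ π.SameCycle y b := fun hyb => hy (Quotient.sound hyb)
      refine Subtype.ext (Quotient.sound ?_)
      rcases (Quotient.exact hxy : (swap a b * π).SameCycle x y).of_swap_mul with hsc | ⟨hxa, hya⟩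
      · exact hsc
      · exact (hxa.resolve_right hx).trans (hya.resolve_right hy).symm
    · rintro ⟨z⟩
      by_cases hz : π.SameCycle z b
      · refine ⟨⟨⟦a⟧, fun h' => h (Quotient.exact h')⟩, Quotient.sound ?_⟩
        exact hab'.trans (SameCycle.swap_mul hab' hz).symm
      · exact ⟨⟨⟦z⟧, fun h' => hz (Quotient.exact h')⟩, rfl⟩
  rw [cycleCount, cycleCount, ← Nat.card_eq_of_bijective F hF, ← Finite.card_option,
    Nat.card_congr (Equiv.optionSubtypeNe _)]

theorem cycleCount_swap_mul [Finite α] [DecidableEq α] (hab : a ≠ b) :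
    cycleCount π = cycleCount (swap a b * π) + 1 ∨
      cycleCount (swap a b * π) = cycleCount π + 1 := by
  by_cases h : π.SameCycle a b
  · have h' : ¬ (swap a b * π).SameCycle a b := fun h' => (sameCycle_swap_mul_iff hab).1 h' h
    have := cycleCount_swap_mul_add_one hab h'
    rw [swap_mul_self_mul] at this
    exact Or.inr this.symm
  · exact Or.inl (cycleCount_swap_mul_add_one hab h).symm

theorem cycleCount_eq_card_iff [Finite α] : cycleCount π = Nat.card α ↔ π = 1 := by
  have hmk : Function.Surjective (Quotient.mk (SameCycle.setoid π)) := Quotient.mk_surjective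
  constructor
  · intro h
    have hinj := (hmk.bijective_of_nat_card_le h.ge).1
    ext x
    exact hinj (Quotient.sound (sameCycle_apply_left.2 (SameCycle.refl π x)))
  · rintro rfl
    exact (Nat.card_eq_of_bijective _ ⟨fun x y h => sameCycle_one.1 (Quotient.exact h), hmk⟩).symm

theorem exists_eq_swap_of_cycleCount_add_one [Finite α] [DecidableEq α]
    (h : cycleCount π + 1 = Nat.card α) : ∃ a b, a ≠ b ∧ π = swap a b := by
  have hπ : π ≠ 1 := by
    rintro rfl
    rw [cycleCount_eq_card_iff.2 rfl] at h
    omega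
  obtain ⟨a, ha⟩ : ∃ a, π a ≠ a := by
    by_contra! hfix
    exact hπ (ext hfix)
  have hsc : π.SameCycle a (π a) := sameCycle_apply_right.2 (SameCycle.refl π a)
  have hcount := cycleCount_swap_mul_add_one (π := swap a (π a) * π) ha.symm
    (fun h' => (sameCycle_swap_mul_iff ha.symm).1 h' hsc)
  rw [swap_mul_self_mul, h, eq_comm, cycleCount_eq_card_iff] at hcount
  refine ⟨a, π a, ha.symm, ?_⟩
  calc π = swap a (π a) * (swap a (π a) * π) := (swap_mul_self_mul _ _ _).symm
    _ = swap a (π a) := by rw [hcount, mul_one]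

theorem even_card_of_involutive [DecidableEq α] {f : Perm α} {s : Finset α}
    (hf : Function.Involutive f) (hfix : ∀ x ∈ s, f x ≠ x) (hs : Set.MapsTo f s s) :
    Even s.card := by
  let g := f.subtypePerm (p := (· ∈ s)) fun x => ⟨fun hx => hf x ▸ hs hx, fun hx => hs hx⟩
  have hg : g ^ 2 ^ 1 = 1 := by ext; simp [g, sq, hf _]
  have hsupp : g.supportᶜ = ∅ := by
    ext x
    simpa [g, Subtype.ext_iff] using hfix x x.2
  have := card_compl_support_modEq (p := 2) hg
  rw [hsupp, Finset.card_empty, Fintype.card_coe] at this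
  exact Nat.even_iff.2 this.symm

section TwoInvolutions

variable {u v : Perm α}

theorem mem_orbit_closure_pair_iff [Finite α] (hu : Function.Involutive u)
    (hv : Function.Involutive v) :
    y ∈ MulAction.orbit (Subgroup.closure {u, v}) x ↔
      (u * v).SameCycle x y ∨ (u * v).SameCycle x (u y) := by
  have huH : u ∈ Subgroup.closure {u, v} := Subgroup.subset_closure (by simp)
  have hvH : v ∈ Subgroup.closure {u, v} := Subgroup.subset_closure (by simp)
  constructor
  · rintro ⟨⟨g, hg⟩, rfl⟩
    let S : Set α := {y | (u * v).SameCycle x y ∨ (u * v).SameCycle x (u y)}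
    have huS : Set.MapsTo u S S := fun y hy => by
      simpa only [S, Set.mem_ofPred_eq, hu y, or_comm] using hy
    have hvS : Set.MapsTo v S S := by
      rintro y (hy | hy)
      · refine Or.inr ?_
        rw [show u (v y) = (u * v) y from rfl]
        exact sameCycle_apply_right.2 hy
      · refine Or.inl ?_
        rw [show v y = (u * v).symm (u y) from ((u * v).symm_apply_eq.2 (by simp [hv y])).symm]
        exact sameCycle_symm_apply_right.2 hy
    have hu' : u⁻¹ = u := inv_eq_of_mul_eq_one_right (ext hu)
    have hv' : v⁻¹ = v := inv_eq_of_mul_eq_one_right (ext hv)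
    have hgS : Set.MapsTo g S S := by
      induction hg using Subgroup.closure_induction'' with
      | mem w hw => rcases hw with rfl | rfl <;> assumption
      | inv_mem w hw => rcases hw with rfl | rfl; exacts [hu' ▸ huS, hv' ▸ hvS]
      | one => exact Set.mapsTo_id S
      | mul g h _ _ hg hh => exact hg.comp hh
    exact hgS (Or.inl (SameCycle.refl _ x))
  · rintro (⟨i, rfl⟩ | ⟨i, hi⟩)
    · exact ⟨⟨(u * v) ^ i, zpow_mem (mul_mem huH hvH) i⟩, rfl⟩
    · refine ⟨⟨u * (u * v) ^ i, mul_mem huH (zpow_mem (mul_mem huH hvH) i)⟩, ?_⟩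
      simp [Subgroup.smul_def, hi, hu y]

theorem pred_mul_apply_iff {P : α → Prop} (hPu : ∀ x, P (u x) ↔ ¬ P x)
    (hPv : ∀ x, P (v x) ↔ ¬ P x) (x : α) : P ((u * v) x) ↔ P x := by
  rw [mul_apply, hPu, hPv, not_not]

theorem card_orbitRel_quotient_closure_pair [Finite α] (hu : Function.Involutive u)
    (hv : Function.Involutive v) {P : α → Prop} (hPu : ∀ x, P (u x) ↔ ¬ P x)
    (hPv : ∀ x, P (v x) ↔ ¬ P x) :
    Nat.card (MulAction.orbitRel.Quotient (Subgroup.closure {u, v}) α) =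
      cycleCount ((u * v).subtypePerm (pred_mul_apply_iff hPu hPv)) := by
  have hρP : Set.MapsTo (u * v) {z | P z} {z | P z} := fun z => (pred_mul_apply_iff hPu hPv z).2
  let F : Quotient (SameCycle.setoid ((u * v).subtypePerm (pred_mul_apply_iff hPu hPv))) →
      MulAction.orbitRel.Quotient (Subgroup.closure {u, v}) α :=
    Quotient.map Subtype.val fun x y h =>
      (mem_orbit_closure_pair_iff hu hv).2 (Or.inl (sameCycle_subtypePerm.1 h).symm)
  have hF : F.Bijective := by
    constructor
    · rintro ⟨x⟩ ⟨y⟩ hxy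
      refine Quotient.sound (sameCycle_subtypePerm.2 ?_).symm
      refine ((mem_orbit_closure_pair_iff hu hv).1 (Quotient.exact hxy)).resolve_right fun h => ?_
      exact (hPu x).1 (h.mem_of_mapsTo hρP y.2) x.2
    · rintro ⟨z⟩
      by_cases hz : P z
      · exact ⟨⟦⟨z, hz⟩⟧, rfl⟩
      · refine ⟨⟦⟨u z, (hPu z).2 hz⟩⟧, Quotient.sound ?_⟩
        exact ⟨⟨u, Subgroup.subset_closure (by simp)⟩, rfl⟩
  exact (Nat.card_eq_of_bijective F hF).symm

theorem two_mul_card_subtype_of_swaps [Finite α] {P : α → Prop} (hPu : ∀ x, P (u x) ↔ ¬ P x) :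
    2 * Nat.card {x // P x} = Nat.card α := by
  classical
  have e : {x // P x} ≃ {x // ¬ P x} := u.subtypeEquiv fun x => by rw [hPu, not_not]
  calc 2 * Nat.card {x // P x} = Nat.card {x // P x} + Nat.card {x // ¬ P x} := by
        rw [two_mul, Nat.card_congr e]
    _ = Nat.card α := by rw [← Nat.card_sum, Nat.card_congr (Equiv.sumCompl P)]

end TwoInvolutions

end Equiv.Perm

def Fin.IsEven {m : ℕ} (i : Fin m) : Prop := Even (i : ℕ)

namespace IsCrossinglessMatching

open Equiv Perm

variable {m : ℕ} {σ : Perm (Fin m)}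

theorem mapsTo_Ioo (h : IsCrossinglessMatching σ) (a : Fin m) :
    Set.MapsTo σ (Finset.Ioo a (σ a) : Set (Fin m)) (Finset.Ioo a (σ a)) := by
  obtain ⟨hinv, -, hnc⟩ := h
  intro x hx
  simp only [Finset.coe_Ioo, Set.mem_Ioo] at hx ⊢
  obtain ⟨hax, hxa⟩ := hx
  constructor
  · by_contra! hle
    have hne : σ x ≠ a := fun he => hxa.ne (by rw [← he, hinv])
    exact hnc (σ x) a (hle.lt_of_ne hne) (by rwa [hinv]) (by rwa [hinv])
  · by_contra! hle
    have hne : σ a ≠ σ x := fun he => hax.ne (σ.injective he)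
    exact hnc a x hax hxa (hle.lt_of_ne hne)

theorem isEven_apply_iff (h : IsCrossinglessMatching σ) (i : Fin m) :
    (σ i).IsEven ↔ ¬ i.IsEven := by
  suffices key : ∀ a, a < σ a → ((σ a).IsEven ↔ ¬ a.IsEven) by
    rcases lt_or_gt_of_ne (h.2.1 i) with hlt | hgt
    · have := key (σ i) (by rwa [h.1 i])
      rw [h.1 i] at this
      tauto
    · exact key i hgt
  intro a ha
  have heven := even_card_of_involutive h.1 (fun x _ => h.2.1 x) (h.mapsTo_Ioo a)
  have ha' : (a : ℕ) < σ a := ha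
  rw [Fin.card_Ioo, Nat.even_iff] at heven
  rw [Fin.IsEven, Fin.IsEven, Nat.even_iff, Nat.even_iff]
  omega

def mulOnEvens {τ : Perm (Fin m)} (hσ : IsCrossinglessMatching σ)
    (hτ : IsCrossinglessMatching τ) : Perm {i : Fin m // i.IsEven} :=
  (σ * τ).subtypePerm (pred_mul_apply_iff hσ.isEven_apply_iff hτ.isEven_apply_iff)

theorem numComponents_eq_cycleCount {τ : Perm (Fin m)} (hσ : IsCrossinglessMatching σ)
    (hτ : IsCrossinglessMatching τ) : numComponents σ τ = cycleCount (hσ.mulOnEvens hτ) :=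
  card_orbitRel_quotient_closure_pair hσ.1 hτ.1 hσ.isEven_apply_iff hτ.isEven_apply_iff

theorem mulOnEvens_mul_mulOnEvens {σ' τ : Perm (Fin m)} (hσ' : IsCrossinglessMatching σ')
    (hσ : IsCrossinglessMatching σ) (hτ : IsCrossinglessMatching τ) :
    hσ'.mulOnEvens hσ * hσ.mulOnEvens hτ = hσ'.mulOnEvens hτ := by
  rw [mulOnEvens, mulOnEvens, mulOnEvens, subtypePerm_mul]
  congr 1
  ext x
  simp [hσ.1 _]

end IsCrossinglessMatching

theorem numComponents_comm {m : ℕ} (σ τ : Equiv.Perm (Fin m)) :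
    numComponents σ τ = numComponents τ σ := by
  rw [numComponents, numComponents, Set.pair_comm]

/-- If crossingless matchings `σ, σ'` of `2n` points meet in codimension one
(`c(σ,σ') = n - 1`), then for any crossingless matching `τ` the codimension of
intersection changes by exactly one: `c(σ,τ) = c(σ',τ) ± 1`. -/
theorem numComponents_change_by_one {n : ℕ} (σ σ' τ : Equiv.Perm (Fin (2 * n)))
    (hσ : IsCrossinglessMatching σ) (hσ' : IsCrossinglessMatching σ')
    (hτ : IsCrossinglessMatching τ)
    (hcodim : numComponents σ σ' + 1 = n) :
    numComponents σ τ = numComponents σ' τ + 1 ∨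
      numComponents σ' τ = numComponents σ τ + 1 := by
  have hcard : Nat.card {i : Fin (2 * n) // i.IsEven} = n := by
    have := Equiv.Perm.two_mul_card_subtype_of_swaps hσ.isEven_apply_iff
    rw [Nat.card_fin] at this
    omega
  rw [numComponents_comm, hσ'.numComponents_eq_cycleCount hσ] at hcodim
  obtain ⟨a, b, hab, hswap⟩ :=
    Equiv.Perm.exists_eq_swap_of_cycleCount_add_one (hcodim.trans hcard.symm)
  rw [hσ.numComponents_eq_cycleCount hτ, hσ'.numComponents_eq_cycleCount hτ,
    ← hσ'.mulOnEvens_mul_mulOnEvens hσ hτ, hswap]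
  exact Equiv.Perm.cycleCount_swap_mul hab
end

section
/- Let σ and τ be crossingless matchings of 2n points which meet in codimension k, i.e. c(σ, τ) = n − k. Then there is an interpolating sequence ℘₀ = σ, ℘₁, …, ℘ₖ = τ of crossingless matchings of 2n points such that for all admissible indices i: ℘ᵢ and ℘ᵢ₊₁ meet in codimension one (c(℘ᵢ, ℘ᵢ₊₁) = n − 1), ℘₀ and ℘ᵢ meet in codimension i (c(℘₀, ℘ᵢ) = n − i), and ℘ᵢ and ℘ₖ meet in codimension k − i (c(℘ᵢ, ℘ₖ) = n − (k − i)). -/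
set_option linter.unusedSectionVars false

open Equiv MulAction Set

namespace CM

variable {m : ℕ}

abbrev grp (σ τ : Perm (Fin m)) : Subgroup (Perm (Fin m)) := Subgroup.closure {σ, τ}

lemma numComponents_eq (σ τ : Perm (Fin m)) :
    numComponents σ τ = Nat.card (orbitRel.Quotient ↥(grp σ τ) (Fin m)) := rfl

lemma numComponents_comm (σ τ : Perm (Fin m)) : numComponents σ τ = numComponents τ σ := by
  unfold numComponents
  rw [Set.pair_comm]

lemma sigma_mem (σ τ : Perm (Fin m)) : σ ∈ grp σ τ :=
  Subgroup.subset_closure (Set.mem_insert _ _)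

lemma tau_mem (σ τ : Perm (Fin m)) : τ ∈ grp σ τ :=
  Subgroup.subset_closure (Set.mem_insert_of_mem _ rfl)

lemma mem_orbit_of_mem (σ τ : Perm (Fin m)) {g : Perm (Fin m)} (hg : g ∈ grp σ τ)
    (x : Fin m) : g x ∈ orbit ↥(grp σ τ) x := ⟨⟨g, hg⟩, rfl⟩

noncomputable abbrev mkq (σ τ : Perm (Fin m)) (x : Fin m) :
    orbitRel.Quotient ↥(grp σ τ) (Fin m) := Quotient.mk'' x

lemma mkq_surjective (σ τ : Perm (Fin m)) : Function.Surjective (mkq σ τ) :=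
  fun q => Quotient.inductionOn' q (fun x => ⟨x, rfl⟩)

lemma mk_gen_apply (σ τ : Perm (Fin m)) {g : Perm (Fin m)} (hg : g ∈ grp σ τ) (x : Fin m) :
    mkq σ τ (g x) = mkq σ τ x :=
  Quotient.sound' (orbitRel_apply.mpr ⟨⟨g, hg⟩, rfl⟩)

lemma fact_const {β : Type*} (σ τ : Perm (Fin m)) (φ : Fin m → β)
    (h1 : ∀ x, φ (σ x) = φ x) (h2 : ∀ x, φ (τ x) = φ x) :
    ∀ g ∈ grp σ τ, ∀ x, φ (g x) = φ x := by
  intro g hg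
  induction hg using Subgroup.closure_induction with
  | mem y hy =>
    rcases hy with h | h
    · subst h; exact h1
    · simp only [Set.mem_singleton_iff] at h; subst h; exact h2
  | one => intro x; simp
  | mul a b ha hb iha ihb => intro x; simp only [Perm.mul_apply]; rw [iha (b x), ihb x]
  | inv a ha iha =>
    intro x
    conv_rhs => rw [show x = a (a⁻¹ x) by simp]
    rw [iha]

lemma lift_of_const {β : Type*} (σ τ : Perm (Fin m)) (φ : Fin m → β)
    (h1 : ∀ x, φ (σ x) = φ x) (h2 : ∀ x, φ (τ x) = φ x) :
    ∃ f : orbitRel.Quotient ↥(grp σ τ) (Fin m) → β, ∀ x, f (mkq σ τ x) = φ x := by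
  refine ⟨fun q => Quotient.liftOn' q φ ?_, fun x => rfl⟩
  intro x y h
  have h' : x ∈ orbit ↥(grp σ τ) y := h
  obtain ⟨g, rfl⟩ := h'
  exact fact_const σ τ φ h1 h2 g g.2 y

lemma orbit_subset_of_invariant (σ τ : Perm (Fin m)) (S : Set (Fin m))
    (h1 : ∀ x, x ∈ S ↔ σ x ∈ S) (h2 : ∀ x, x ∈ S ↔ τ x ∈ S) {x : Fin m} (hx : x ∈ S) :
    orbit ↥(grp σ τ) x ⊆ S := by
  have key : ∀ g ∈ grp σ τ, ∀ y, y ∈ S ↔ g y ∈ S := by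
    intro g hg
    induction hg using Subgroup.closure_induction with
    | mem y hy => rcases hy with h | h
                  · subst h; exact h1
                  · simp only [Set.mem_singleton_iff] at h; subst h; exact h2
    | one => intro y; simp
    | mul a b ha hb iha ihb => intro y; rw [ihb y, iha (b y)]; simp
    | inv a ha iha => intro y; conv_lhs => rw [show y = a (a⁻¹ y) by simp, ← iha (a⁻¹ y)]
  rintro _ ⟨g, rfl⟩
  exact (key g g.2 x).mp hx

section cardtools

variable {A B : Type*} [Finite A] [Finite B]

lemma card_le_of_inj_miss (g : B → A) (hg : Function.Injective g) (x : A)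
    (hx : x ∉ Set.range g) : Nat.card B + 1 ≤ Nat.card A := by
  have h1 : Nat.card B = (Set.range g).ncard := by
    rw [← Nat.card_coe_set_eq]
    exact (Nat.card_congr (Equiv.ofInjective g hg)).symm ▸ rfl
  have h2 : (Set.range g).ncard < (Set.univ : Set A).ncard := by
    refine Set.ncard_lt_ncard ⟨Set.subset_univ _, fun h => hx (h (Set.mem_univ x))⟩
      Set.finite_univ
  rw [Set.ncard_univ] at h2
  omega

lemma card_le_of_near_surj (f : B → A) (x0 : A)
    (hf : ∀ y, y ≠ x0 → ∃ x, f x = y) : Nat.card A ≤ Nat.card B + 1 := by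
  have hsub : (Set.univ : Set A) ⊆ Set.range f ∪ {x0} := by
    intro y _
    by_cases h : y = x0
    · exact Or.inr h
    · exact Or.inl (hf y h)
  calc Nat.card A = (Set.univ : Set A).ncard := (Set.ncard_univ A).symm
    _ ≤ (Set.range f ∪ {x0}).ncard := Set.ncard_le_ncard hsub (Set.toFinite _)
    _ ≤ (Set.range f).ncard + ({x0} : Set A).ncard := Set.ncard_union_le _ _
    _ ≤ Nat.card B + 1 := by
        rw [Set.ncard_singleton]
        have : (Set.range f).ncard ≤ Nat.card B := by
          rw [← Set.image_univ]
          calc (f '' Set.univ).ncard ≤ (Set.univ : Set B).ncard :=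
                Set.ncard_image_le (Set.toFinite _)
            _ = Nat.card B := Set.ncard_univ B
        omega

lemma card_lt_of_surj_noninj (f : B → A) (hf : Function.Surjective f)
    {x y : B} (hxy : f x = f y) (hne : x ≠ y) : Nat.card A + 1 ≤ Nat.card B := by
  set g := Function.surjInv hf with hgdef
  have hginj : Function.Injective g := Function.injective_surjInv hf
  have hfg : ∀ a, f (g a) = a := Function.surjInv_eq hf
  have : x ∉ Set.range g ∨ y ∉ Set.range g := by
    by_contra h
    push_neg at h
    obtain ⟨⟨a, ha⟩, ⟨b, hb⟩⟩ := h
    apply hne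
    have : a = b := by rw [← hfg a, ← hfg b, ha, hb, hxy]
    rw [← ha, ← hb, this]
  rcases this with h | h
  · exact card_le_of_inj_miss g hginj x h
  · exact card_le_of_inj_miss g hginj y h

end cardtools

/-- Merge the class `d` into the class `c`. -/
noncomputable def merge {γ : Type*} (c d q : γ) : γ :=
  open scoped Classical in if q = d then c else q

lemma merge_left {γ : Type*} (c d : γ) : merge c d c = c := by
  unfold merge; split_ifs <;> rfl

lemma merge_right {γ : Type*} (c d : γ) : merge c d d = c := by
  unfold merge
  split_ifs with h
  · rfl
  · exact absurd rfl h

lemma merge_of_ne {γ : Type*} (c d q : γ) (h : q ≠ d) : merge c d q = q := by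
  unfold merge; exact if_neg h

section quotcount

variable (σ₁ τ₁ σ₂ τ₂ : Perm (Fin m))

lemma card_le_of_classes
    (h1 : ∀ x, mkq σ₂ τ₂ (σ₁ x) = mkq σ₂ τ₂ x) (h2 : ∀ x, mkq σ₂ τ₂ (τ₁ x) = mkq σ₂ τ₂ x) :
    Nat.card (orbitRel.Quotient ↥(grp σ₂ τ₂) (Fin m)) ≤
      Nat.card (orbitRel.Quotient ↥(grp σ₁ τ₁) (Fin m)) := by
  obtain ⟨f, hf⟩ := lift_of_const σ₁ τ₁ (mkq σ₂ τ₂) h1 h2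
  apply Nat.card_le_card_of_surjective f
  intro q
  obtain ⟨x, rfl⟩ := mkq_surjective σ₂ τ₂ q
  exact ⟨mkq σ₁ τ₁ x, hf x⟩

lemma card_add_one_le
    (h1 : ∀ x, mkq σ₂ τ₂ (σ₁ x) = mkq σ₂ τ₂ x) (h2 : ∀ x, mkq σ₂ τ₂ (τ₁ x) = mkq σ₂ τ₂ x)
    (x y : Fin m) (hxy : mkq σ₂ τ₂ x = mkq σ₂ τ₂ y)
    (hne : mkq σ₁ τ₁ x ≠ mkq σ₁ τ₁ y) :
    Nat.card (orbitRel.Quotient ↥(grp σ₂ τ₂) (Fin m)) + 1 ≤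
      Nat.card (orbitRel.Quotient ↥(grp σ₁ τ₁) (Fin m)) := by
  obtain ⟨f, hf⟩ := lift_of_const σ₁ τ₁ (mkq σ₂ τ₂) h1 h2
  have hsurj : Function.Surjective f := by
    intro q
    obtain ⟨z, rfl⟩ := mkq_surjective σ₂ τ₂ q
    exact ⟨mkq σ₁ τ₁ z, hf z⟩
  have hval : f (mkq σ₁ τ₁ x) = f (mkq σ₁ τ₁ y) := by rw [hf, hf, hxy]
  exact card_lt_of_surj_noninj f hsurj hval hne

lemma card_le_add_one (c d : Fin m)
    (h1 : ∀ x, merge (mkq σ₂ τ₂ c) (mkq σ₂ τ₂ d) (mkq σ₂ τ₂ (σ₁ x)) =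
      merge (mkq σ₂ τ₂ c) (mkq σ₂ τ₂ d) (mkq σ₂ τ₂ x))
    (h2 : ∀ x, merge (mkq σ₂ τ₂ c) (mkq σ₂ τ₂ d) (mkq σ₂ τ₂ (τ₁ x)) =
      merge (mkq σ₂ τ₂ c) (mkq σ₂ τ₂ d) (mkq σ₂ τ₂ x)) :
    Nat.card (orbitRel.Quotient ↥(grp σ₂ τ₂) (Fin m)) ≤
      Nat.card (orbitRel.Quotient ↥(grp σ₁ τ₁) (Fin m)) + 1 := by
  obtain ⟨f, hf⟩ := lift_of_const σ₁ τ₁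
    (fun x => merge (mkq σ₂ τ₂ c) (mkq σ₂ τ₂ d) (mkq σ₂ τ₂ x)) h1 h2
  apply card_le_of_near_surj f (mkq σ₂ τ₂ d)
  intro q hq
  obtain ⟨x, rfl⟩ := mkq_surjective σ₂ τ₂ q
  exact ⟨mkq σ₁ τ₁ x, by rw [hf]; exact merge_of_ne _ _ _ hq⟩

end quotcount

section orbitcard

lemma two_le_ncard_orbit (σ τ : Perm (Fin m)) (hfp : ∀ i, σ i ≠ i) (x : Fin m) :
    2 ≤ (orbit ↥(grp σ τ) x).ncard := by
  have hsub : ({x, σ x} : Set (Fin m)) ⊆ orbit ↥(grp σ τ) x := by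
    rintro y (rfl | rfl)
    · exact mem_orbit_self _
    · exact mem_orbit_of_mem σ τ (sigma_mem σ τ) x
  calc 2 = ({x, σ x} : Set (Fin m)).ncard := (Set.ncard_pair (Ne.symm (hfp x))).symm
    _ ≤ _ := Set.ncard_le_ncard hsub (Set.toFinite _)

lemma orbit_card_master (σ τ : Perm (Fin m)) (hfp : ∀ i, σ i ≠ i) :
    2 * Nat.card (orbitRel.Quotient ↥(grp σ τ) (Fin m)) ≤ m ∧
      (2 * Nat.card (orbitRel.Quotient ↥(grp σ τ) (Fin m)) = m →
        ∀ x : Fin m, (orbit ↥(grp σ τ) x).ncard = 2) ∧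
      ((∀ x : Fin m, (orbit ↥(grp σ τ) x).ncard ≤ 2) →
        2 * Nat.card (orbitRel.Quotient ↥(grp σ τ) (Fin m)) = m) := by
  classical
  set G := grp σ τ
  letI : Fintype (orbitRel.Quotient ↥G (Fin m)) := Fintype.ofFinite _
  letI : ∀ ω : orbitRel.Quotient ↥G (Fin m), Fintype ω.orbit := fun ω => Fintype.ofFinite _
  have horb : ∀ ω : orbitRel.Quotient ↥G (Fin m), (ω.orbit).ncard = Fintype.card ω.orbit := by
    intro ω; rw [← Nat.card_coe_set_eq, Nat.card_eq_fintype_card]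
  have hout : ∀ ω : orbitRel.Quotient ↥G (Fin m), ω.orbit = orbit ↥G ω.out :=
    fun ω => orbitRel.Quotient.orbit_eq_orbit_out _ Quotient.out_eq'
  have hge : ∀ ω : orbitRel.Quotient ↥G (Fin m), 2 ≤ Fintype.card ω.orbit := by
    intro ω
    rw [← horb, hout]
    exact two_le_ncard_orbit σ τ hfp _
  have hsum : ∑ ω : orbitRel.Quotient ↥G (Fin m), Fintype.card ω.orbit = m := by
    have e := (selfEquivSigmaOrbits' ↥G (Fin m)).symm
    calc ∑ ω : orbitRel.Quotient ↥G (Fin m), Fintype.card ω.orbit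
        = Fintype.card (Σ ω : orbitRel.Quotient ↥G (Fin m), ω.orbit) :=
          (Fintype.card_sigma).symm
      _ = Fintype.card (Fin m) := Fintype.card_congr e
      _ = m := Fintype.card_fin m
  have hcard : Nat.card (orbitRel.Quotient ↥G (Fin m)) =
      Fintype.card (orbitRel.Quotient ↥G (Fin m)) := Nat.card_eq_fintype_card
  refine ⟨?_, ?_, ?_⟩
  · rw [hcard]
    calc 2 * Fintype.card (orbitRel.Quotient ↥G (Fin m))
        = ∑ _ω : orbitRel.Quotient ↥G (Fin m), 2 := by
          rw [Finset.sum_const, Finset.card_univ, smul_eq_mul, mul_comm]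
      _ ≤ ∑ ω : orbitRel.Quotient ↥G (Fin m), Fintype.card ω.orbit :=
          Finset.sum_le_sum (fun ω _ => hge ω)
      _ = m := hsum
  · intro heq x
    have hall : ∀ ω : orbitRel.Quotient ↥G (Fin m), Fintype.card ω.orbit = 2 := by
      by_contra hcon
      push_neg at hcon
      obtain ⟨ω0, hω0⟩ := hcon
      have hlt : (∑ _ω : orbitRel.Quotient ↥G (Fin m), 2) <
          ∑ ω : orbitRel.Quotient ↥G (Fin m), Fintype.card ω.orbit := by
        apply Finset.sum_lt_sum (fun ω _ => hge ω)
        exact ⟨ω0, Finset.mem_univ _, lt_of_le_of_ne (hge ω0) (Ne.symm hω0)⟩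
      rw [Finset.sum_const, Finset.card_univ, smul_eq_mul, hsum] at hlt
      rw [hcard] at heq
      omega
    have := hall (Quotient.mk'' x)
    rw [← horb, orbitRel.Quotient.orbit_mk] at this
    exact this
  · intro hle
    have hall : ∀ ω : orbitRel.Quotient ↥G (Fin m), Fintype.card ω.orbit = 2 := by
      intro ω
      refine le_antisymm ?_ (hge ω)
      rw [← horb, hout]
      exact hle _
    have hs2 : ∑ ω : orbitRel.Quotient ↥G (Fin m), Fintype.card ω.orbit =
        2 * Fintype.card (orbitRel.Quotient ↥G (Fin m)) := by
      rw [Finset.sum_congr rfl (fun ω _ => hall ω), Finset.sum_const, Finset.card_univ,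
        smul_eq_mul, mul_comm]
    rw [hcard]
    exact hs2.symm.trans hsum

end orbitcard

section comps

variable {n : ℕ}

lemma comps_le (σ τ : Perm (Fin (2 * n))) (hfp : ∀ i, σ i ≠ i) :
    numComponents σ τ ≤ n := by
  have h := (orbit_card_master σ τ hfp).1
  rw [numComponents_eq]
  omega

lemma comps_self (σ : Perm (Fin (2 * n))) (h2 : ∀ i, σ (σ i) = i) (hfp : ∀ i, σ i ≠ i) :
    numComponents σ σ = n := by
  have h := (orbit_card_master σ σ hfp).2.2
  have hle : ∀ x : Fin (2 * n), (orbit ↥(grp σ σ) x).ncard ≤ 2 := by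
    intro x
    have hinv : ∀ y : Fin (2 * n), y ∈ ({x, σ x} : Set (Fin (2 * n))) ↔
        σ y ∈ ({x, σ x} : Set (Fin (2 * n))) := by
      intro y
      simp only [Set.mem_insert_iff, Set.mem_singleton_iff]
      constructor
      · rintro (rfl | rfl)
        · exact Or.inr rfl
        · exact Or.inl (h2 x)
      · rintro (hy | hy)
        · exact Or.inr (by rw [← h2 y, hy])
        · exact Or.inl (by rw [← h2 y, hy, h2])
    have hsub := orbit_subset_of_invariant σ σ {x, σ x} hinv hinv (Or.inl rfl)
    calc (orbit ↥(grp σ σ) x).ncard ≤ ({x, σ x} : Set (Fin (2 * n))).ncard :=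
          Set.ncard_le_ncard hsub (Set.toFinite _)
      _ = 2 := Set.ncard_pair (Ne.symm (hfp x))
  have := h hle
  rw [numComponents_eq]
  omega

lemma eq_of_comps_eq (σ τ : Perm (Fin (2 * n))) (h2 : ∀ i, σ (σ i) = i)
    (hfp : ∀ i, σ i ≠ i) (hfpτ : ∀ i, τ i ≠ i) (hc : numComponents σ τ = n) : τ = σ := by
  have h := (orbit_card_master σ τ hfp).2.1
  rw [numComponents_eq] at hc
  have hall := h (by omega)
  apply Equiv.ext
  intro x
  have hsub : ({x, σ x} : Set (Fin (2 * n))) ⊆ orbit ↥(grp σ τ) x := by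
    rintro y (rfl | rfl)
    · exact mem_orbit_self _
    · exact mem_orbit_of_mem σ τ (sigma_mem σ τ) x
  have heq : ({x, σ x} : Set (Fin (2 * n))) = orbit ↥(grp σ τ) x := by
    apply Set.eq_of_subset_of_ncard_le hsub
    rw [hall x, Set.ncard_pair (Ne.symm (hfp x))]
  have hτx : τ x ∈ orbit ↥(grp σ τ) x := mem_orbit_of_mem σ τ (tau_mem σ τ) x
  rw [← heq] at hτx
  rcases hτx with h | h
  · exact absurd h (hfpτ x)
  · exact h

end comps



def surg (σ : Perm (Fin m)) (a b : Fin m) : Perm (Fin m) :=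
  Equiv.swap b (σ a) * σ * Equiv.swap b (σ a)

section eval

variable {σ : Perm (Fin m)} (h2 : ∀ i, σ (σ i) = i) (hf : ∀ i, σ i ≠ i)
  {a b : Fin m} (hab : a ≠ b) (hub : σ a ≠ b)

include h2 hf hab hub

omit h2 hab hub in lemma dist_ua : σ a ≠ a := hf a
omit h2 hab hub in lemma dist_vb : σ b ≠ b := hf b
omit hf hab in lemma dist_va : σ b ≠ a := fun h => hub (by rw [← h2 b, h])
omit hf hub in lemma dist_uv : σ a ≠ σ b := fun h => hab (by rw [← h2 a, h, h2 b])

omit h2 hub in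
lemma surg_apply_a : surg σ a b a = b := by
  unfold surg
  simp only [Perm.mul_apply]
  rw [Equiv.swap_apply_of_ne_of_ne hab (Ne.symm (hf a)), Equiv.swap_apply_right]

omit hub in
lemma surg_apply_b : surg σ a b b = a := by
  unfold surg
  simp only [Perm.mul_apply]
  rw [Equiv.swap_apply_left, h2,
    Equiv.swap_apply_of_ne_of_ne hab (Ne.symm (hf a))]

lemma surg_apply_u : surg σ a b (σ a) = σ b := by
  unfold surg
  simp only [Perm.mul_apply]
  rw [Equiv.swap_apply_right, Equiv.swap_apply_of_ne_of_ne (hf b) (Ne.symm (dist_uv h2 hab))]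

lemma surg_apply_v : surg σ a b (σ b) = σ a := by
  unfold surg
  simp only [Perm.mul_apply]
  rw [Equiv.swap_apply_of_ne_of_ne (hf b) (Ne.symm (dist_uv h2 hab)), h2,
    Equiv.swap_apply_left]

omit hf hab hub in
lemma surg_apply_other {x : Fin m} (hxa : x ≠ a) (hxb : x ≠ b) (hxu : x ≠ σ a) (hxv : x ≠ σ b) :
    surg σ a b x = σ x := by
  unfold surg
  simp only [Perm.mul_apply]
  rw [Equiv.swap_apply_of_ne_of_ne hxb hxu,
    Equiv.swap_apply_of_ne_of_ne (fun h => hxv (by rw [← h2 x, h]))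
      (fun h => hxa (by rw [← h2 x, h, h2 a]))]

omit hf hab hub in
lemma surg_invol : ∀ x, surg σ a b (surg σ a b x) = x := by
  intro x
  unfold surg
  simp only [Perm.mul_apply, Equiv.swap_apply_self, h2]

omit h2 hab hub in
lemma surg_fpf : ∀ x, surg σ a b x ≠ x := by
  intro x h
  unfold surg at h
  simp only [Perm.mul_apply] at h
  have := congrArg (Equiv.swap b (σ a)) h
  rw [Equiv.swap_apply_self] at this
  exact hf _ this

omit h2 in
lemma surg_ne : surg σ a b ≠ σ := by
  intro h
  apply hub
  rw [← h]
  exact surg_apply_a hf hab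

end eval

section cross

variable {σ τ : Perm (Fin m)} (hσ : IsCrossinglessMatching σ) (hτ : IsCrossinglessMatching τ)
  {a b : Fin m} (hab : a < b) (hτab : τ a = b) (hub : σ a ≠ b)
  (hint : ∀ c, a < c → c < b → σ c = τ c)

include hτ hab hτab in
lemma tau_interior : ∀ c, a < c → c < b → a < τ c ∧ τ c < b := by
  intro c hac hcb
  obtain ⟨h2, hf, hcr⟩ := hτ
  have hca : τ c ≠ a := fun h => absurd (show c = b by rw [← h2 c, h, hτab]) (ne_of_lt hcb)
  have hcb' : τ c ≠ b := fun h => absurd (show c = a by rw [← h2 c, h, ← hτab, h2]) (ne_of_gt hac)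
  constructor
  · by_contra hle
    push_neg at hle
    have hlt : τ c < a := lt_of_le_of_ne hle hca
    exact hcr (τ c) a hlt (by rw [h2]; exact hac) (by rw [h2, hτab]; exact hcb)
  · by_contra hle
    push_neg at hle
    have hlt : b < τ c := lt_of_le_of_ne hle (Ne.symm hcb')
    exact hcr a c hac (by rw [hτab]; exact hcb) (by rw [hτab]; exact hlt)

include hτ hab hτab hint in
lemma sigma_interior : ∀ c, a < c → c < b → a < σ c ∧ σ c < b := by
  intro c hac hcb
  rw [hint c hac hcb]
  exact tau_interior hτ hab hτab c hac hcb

include hσ hτ hab hτab hub hint in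
lemma u_pos : σ a < a ∨ b < σ a := by
  obtain ⟨h2, hf, -⟩ := hσ
  rcases lt_trichotomy (σ a) a with h | h | h
  · exact Or.inl h
  · exact absurd h (hf a)
  · rcases lt_trichotomy (σ a) b with h' | h' | h'
    · exfalso
      have := (sigma_interior hτ hab hτab hint (σ a) h h').1
      rw [h2] at this
      exact lt_irrefl a this
    · exact absurd h' hub
    · exact Or.inr h'

include hσ hτ hab hτab hub hint in
lemma v_pos : σ b < a ∨ b < σ b := by
  obtain ⟨h2, hf, -⟩ := hσ
  rcases lt_trichotomy (σ b) a with h | h | h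
  · exact Or.inl h
  · exact absurd h (dist_va h2 hub)
  · rcases lt_trichotomy (σ b) b with h' | h' | h'
    · exfalso
      have := (sigma_interior hτ hab hτab hint (σ b) h h').2
      rw [h2] at this
      exact lt_irrefl b this
    · exact absurd h' (hf b)
    · exact Or.inr h'

include hσ hτ hab hτab hub hint in
/-- The three possible configurations of `u = σ a`, `v = σ b` relative to `a < b`. -/
lemma config : (σ b < σ a ∧ σ a < a) ∨ (σ a < a ∧ b < σ b) ∨ (b < σ b ∧ σ b < σ a) := by
  have h2 := hσ.1
  have hcr := hσ.2.2
  have huv : σ a ≠ σ b := dist_uv h2 (ne_of_lt hab)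
  rcases u_pos hσ hτ hab hτab hub hint with hu | hu
  · rcases v_pos hσ hτ hab hτab hub hint with hv | hv
    · left
      refine ⟨?_, hu⟩
      rcases lt_trichotomy (σ b) (σ a) with h | h | h
      · exact h
      · exact absurd h.symm huv
      · exact absurd (hcr (σ a) (σ b) h (by rw [h2]; exact hv) (by rw [h2, h2]; exact hab)) id
    · exact Or.inr (Or.inl ⟨hu, hv⟩)
  · rcases v_pos hσ hτ hab hτab hub hint with hv | hv
    · exact absurd (hcr (σ b) a hv (by rw [h2]; exact hab) (by rw [h2]; exact hu)) id
    · right; right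
      refine ⟨hv, ?_⟩
      rcases lt_trichotomy (σ b) (σ a) with h | h | h
      · exact h
      · exact absurd h.symm huv
      · exact absurd (hcr a b hab hu h) id

include hσ hτ hab hτab hub hint in
/-- no σ-arc crosses the new arc {σ a, σ b}. -/
lemma bash (x : Fin m) (hxa : x ≠ a) (hxb : x ≠ b) (hxu : x ≠ σ a) (hxv : x ≠ σ b)
    (hlo : min (σ a) (σ b) < x) (hhi : x < max (σ a) (σ b))
    (hout : σ x < min (σ a) (σ b) ∨ max (σ a) (σ b) < σ x) : False := by
  have h2 := hσ.1
  have hcr := hσ.2.2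
  have hwa : σ x ≠ a := fun h => hxu (by rw [← h2 x, h])
  have hwb : σ x ≠ b := fun h => hxv (by rw [← h2 x, h])
  rcases config hσ hτ hab hτab hub hint with ⟨hvu, hua⟩ | ⟨hua, hbv⟩ | ⟨hbv, hvu⟩
  · -- config 1 : v < u < a
    rw [min_eq_right hvu.le] at hlo hout
    rw [max_eq_left hvu.le] at hhi hout
    rcases hout with hwlo | hwhi
    · exact hcr (σ x) (σ b) hwlo (by rw [h2]; exact hlo)
        (by rw [h2, h2]; exact (hhi.trans hua).trans hab)
    · rcases lt_trichotomy (σ x) a with h1 | h1 | h1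
      · exact hcr x (σ a) hhi hwhi (by rw [h2]; exact h1)
      · exact hwa h1
      · rcases lt_trichotomy (σ x) b with h3 | h3 | h3
        · have := (sigma_interior hτ hab hτab hint (σ x) h1 h3).1
          rw [h2] at this
          exact absurd this (not_lt.mpr ((hhi.trans hua).le))
        · exact hwb h3
        · exact hcr (σ b) x hlo (by rw [h2]; exact (hhi.trans hua).trans hab)
            (by rw [h2]; exact h3)
  · -- config 2 : u < a < b < v
    rw [min_eq_left ((hua.trans hab).trans hbv).le] at hlo hout
    rw [max_eq_right ((hua.trans hab).trans hbv).le] at hhi hout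
    rcases lt_trichotomy x a with h1 | h1 | h1
    · rcases hout with hwlo | hwhi
      · exact hcr (σ x) (σ a) hwlo (by rw [h2]; exact hlo) (by rw [h2, h2]; exact h1)
      · exact hcr (σ a) x hlo (by rw [h2]; exact h1)
          (by rw [h2]; exact (hab.trans hbv).trans hwhi)
    · exact hxa h1
    · rcases lt_trichotomy x b with h3 | h3 | h3
      · have hsx := sigma_interior hτ hab hτab hint x h1 h3
        rcases hout with hwlo | hwhi
        · exact absurd (hua.trans hsx.1) (not_lt.mpr hwlo.le)
        · exact absurd (hsx.2.trans hbv) (not_lt.mpr hwhi.le)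
      · exact hxb h3
      · rcases hout with hwlo | hwhi
        · exact hcr (σ x) b ((hwlo.trans hua).trans hab) (by rw [h2]; exact h3)
            (by rw [h2]; exact hhi)
        · exact hcr b x h3 hhi hwhi
  · -- config 4 : a < b < v < u
    rw [min_eq_right hvu.le] at hlo hout
    rw [max_eq_left hvu.le] at hhi hout
    rcases hout with hwlo | hwhi
    · rcases lt_trichotomy (σ x) a with h1 | h1 | h1
      · exact hcr (σ x) a h1 (by rw [h2]; exact hab.trans (hbv.trans hlo))
          (by rw [h2]; exact hhi)
      · exact hwa h1
      · rcases lt_trichotomy (σ x) b with h3 | h3 | h3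
        · have := (sigma_interior hτ hab hτab hint (σ x) h1 h3).2
          rw [h2] at this
          exact absurd this (not_lt.mpr (hbv.trans hlo).le)
        · exact hwb h3
        · exact hcr b (σ x) h3 hwlo (by rw [h2]; exact hlo)
    · exact hcr a x (hab.trans (hbv.trans hlo)) hhi hwhi

include hσ hτ hab hτab hub hint in
lemma surg_classify (p q : Fin m) (hpq : surg σ a b p = q) (hlt : p < q) :
    (p = a ∧ q = b) ∨ (p = min (σ a) (σ b) ∧ q = max (σ a) (σ b)) ∨
      (σ p = q ∧ p ≠ a ∧ p ≠ b ∧ p ≠ σ a ∧ p ≠ σ b ∧ q ≠ a ∧ q ≠ b ∧ q ≠ σ a ∧ q ≠ σ b) := by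
  have h2 := hσ.1
  have hf := hσ.2.1
  have habne : a ≠ b := ne_of_lt hab
  by_cases hpa : p = a
  · subst hpa
    rw [surg_apply_a hf habne] at hpq
    exact Or.inl ⟨rfl, hpq.symm⟩
  by_cases hpb : p = b
  · subst hpb
    rw [surg_apply_b h2 hf habne] at hpq
    exact absurd (hpq ▸ hlt) (not_lt.mpr hab.le)
  by_cases hpu : p = σ a
  · subst hpu
    rw [surg_apply_u h2 hf habne hub] at hpq
    subst hpq
    have huv : σ a < σ b := hlt
    exact Or.inr (Or.inl ⟨(min_eq_left huv.le).symm, (max_eq_right huv.le).symm⟩)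
  by_cases hpv : p = σ b
  · subst hpv
    rw [surg_apply_v h2 hf habne hub] at hpq
    subst hpq
    have hvu : σ b < σ a := hlt
    exact Or.inr (Or.inl ⟨(min_eq_right hvu.le).symm, (max_eq_left hvu.le).symm⟩)
  · rw [surg_apply_other h2 hpa hpb hpu hpv] at hpq
    subst hpq
    refine Or.inr (Or.inr ⟨rfl, hpa, hpb, hpu, hpv, ?_, ?_, ?_, ?_⟩)
    · exact fun h => hpu (by rw [← h2 p, h])
    · exact fun h => hpv (by rw [← h2 p, h])
    · exact fun h => hpa (by rw [← h2 p, h, h2])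
    · exact fun h => hpb (by rw [← h2 p, h, h2])

include hσ hτ hab hτab hub hint in
lemma surg_noncrossing :
    ∀ x y : Fin m, x < y → y < surg σ a b x → surg σ a b x < surg σ a b y → False := by
  intro x y hxy hyq hqs
  have h2 := hσ.1
  have hcr := hσ.2.2
  obtain ⟨q1, hq1⟩ : ∃ q, surg σ a b x = q := ⟨_, rfl⟩
  obtain ⟨q2, hq2⟩ : ∃ q, surg σ a b y = q := ⟨_, rfl⟩
  rw [hq1] at hyq hqs
  rw [hq2] at hqs
  have c1 := surg_classify hσ hτ hab hτab hub hint x q1 hq1 (hxy.trans hyq)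
  have c2 := surg_classify hσ hτ hab hτab hub hint y q2 hq2 (hyq.trans hqs)
  have hmm : ∀ z : Fin m, z = min (σ a) (σ b) ∨ z = max (σ a) (σ b) → ¬(a < z ∧ z < b) := by
    rintro z (hz | hz) ⟨hz1, hz3⟩
    · rcases min_choice (σ a) (σ b) with hm | hm
      · rcases u_pos hσ hτ hab hτab hub hint with h | h
        · exact absurd (hz1.trans_le (le_of_eq (hz.trans hm))) (not_lt.mpr h.le)
        · rw [hz, hm] at hz3; exact absurd (h.trans hz3) (lt_irrefl b)
      · rcases v_pos hσ hτ hab hτab hub hint with h | h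
        · exact absurd (hz1.trans_le (le_of_eq (hz.trans hm))) (not_lt.mpr h.le)
        · rw [hz, hm] at hz3; exact absurd (h.trans hz3) (lt_irrefl b)
    · rcases max_choice (σ a) (σ b) with hm | hm
      · rcases u_pos hσ hτ hab hτab hub hint with h | h
        · exact absurd (hz1.trans_le (le_of_eq (hz.trans hm))) (not_lt.mpr h.le)
        · rw [hz, hm] at hz3; exact absurd (h.trans hz3) (lt_irrefl b)
      · rcases v_pos hσ hτ hab hτab hub hint with h | h
        · exact absurd (hz1.trans_le (le_of_eq (hz.trans hm))) (not_lt.mpr h.le)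
        · rw [hz, hm] at hz3; exact absurd (h.trans hz3) (lt_irrefl b)
  rcases c1 with ⟨hx1, hx2⟩ | ⟨hx1, hx2⟩ | ⟨hx1, hx2, hx3, hx4, hx5, hx6, hx7, hx8, hx9⟩
  · -- arc1 = {a, b}
    subst hx1; subst hx2
    rcases c2 with ⟨hy1, hy2⟩ | ⟨hy1, hy2⟩ | ⟨hy1, hy2, hy3, hy4, hy5, hy6, hy7, hy8, hy9⟩
    · subst hy1; exact lt_irrefl _ hxy
    · exact hmm y (Or.inl hy1) ⟨hxy, hyq⟩
    · have hsy := (sigma_interior hτ hab hτab hint y hxy hyq).2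
      rw [hy1] at hsy
      exact lt_irrefl _ (hsy.trans hqs)
  · -- arc1 = {min, max}
    rcases c2 with ⟨hy1, hy2⟩ | ⟨hy1, hy2⟩ | ⟨hy1, hy2, hy3, hy4, hy5, hy6, hy7, hy8, hy9⟩
    · subst hy1; subst hy2
      exact hmm q1 (Or.inr hx2) ⟨hyq, hqs⟩
    · rw [hx1, hy1] at hxy
      exact lt_irrefl _ hxy
    · refine bash hσ hτ hab hτab hub hint y hy2 hy3 hy4 hy5 ?_ ?_ (Or.inr ?_)
      · rw [← hx1]; exact hxy
      · rw [← hx2]; exact hyq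
      · rw [hy1, ← hx2]; exact hqs
  · -- arc1 is a σ-arc
    have hsq1 : σ q1 = x := by rw [← hx1, h2]
    rcases c2 with ⟨hy1, hy2⟩ | ⟨hy1, hy2⟩ | ⟨hy1, hy2, hy3, hy4, hy5, hy6, hy7, hy8, hy9⟩
    · subst hy1; subst hy2
      have hsx := (sigma_interior hτ hab hτab hint q1 hyq hqs).1
      rw [hsq1] at hsx
      exact lt_irrefl _ (hsx.trans hxy)
    · refine bash hσ hτ hab hτab hub hint q1 hx6 hx7 hx8 hx9 ?_ ?_ (Or.inl ?_)
      · rw [← hy1]; exact hyq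
      · rw [← hy2]; exact hqs
      · rw [hsq1, ← hy1]; exact hxy
    · refine hcr x y hxy ?_ ?_
      · rw [hx1]; exact hyq
      · rw [hx1, hy1]; exact hqs

end cross


lemma exists_min_arc {σ τ : Perm (Fin m)} (hσ : IsCrossinglessMatching σ)
    (hτ : IsCrossinglessMatching τ) (hne : σ ≠ τ) :
    ∃ a b : Fin m, a < b ∧ τ a = b ∧ σ a ≠ b ∧ ∀ c, a < c → c < b → σ c = τ c := by
  have hP : ∃ d : ℕ, ∃ a b : Fin m, a < b ∧ τ a = b ∧ σ a ≠ b ∧ (b : ℕ) - (a : ℕ) = d := by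
    have hx : ∃ x, σ x ≠ τ x := by
      by_contra h
      push_neg at h
      exact hne (Equiv.ext h)
    obtain ⟨x, hx⟩ := hx
    rcases lt_trichotomy x (τ x) with h | h | h
    · exact ⟨_, x, τ x, h, rfl, hx, rfl⟩
    · exact absurd h.symm (hτ.2.1 x)
    · refine ⟨_, τ x, x, h, hτ.1 x, ?_, rfl⟩
      intro hc
      exact hx (by rw [← hσ.1 (τ x), hc])
  classical
  obtain ⟨a, b, hab, hτab, hub, hd⟩ := Nat.find_spec hP
  refine ⟨a, b, hab, hτab, hub, ?_⟩
  intro c hac hcb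
  by_contra hsc
  obtain ⟨hta, htb⟩ := tau_interior hτ hab hτab c hac hcb
  have hvals : (a : ℕ) < c ∧ (c : ℕ) < b ∧ (a : ℕ) < τ c ∧ (τ c : ℕ) < b ∧ (a : ℕ) < b := by
    exact ⟨hac, hcb, hta, htb, hab⟩
  rcases lt_trichotomy c (τ c) with h | h | h
  · have hsmall : ((τ c : ℕ) - (c : ℕ)) < Nat.find hP := by
      rw [← hd]
      have : (c : ℕ) < τ c := h
      omega
    exact Nat.find_min hP hsmall ⟨c, τ c, h, rfl, hsc, rfl⟩
  · exact absurd h.symm (hτ.2.1 c)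
  · have hsmall : ((c : ℕ) - (τ c : ℕ)) < Nat.find hP := by
      rw [← hd]
      have : (τ c : ℕ) < c := h
      omega
    refine Nat.find_min hP hsmall ⟨τ c, c, h, hτ.1 c, ?_, rfl⟩
    intro hc
    exact hsc (by rw [← hσ.1 (τ c), hc])
  


section surgcount

variable {σ : Perm (Fin m)} (h2 : ∀ i, σ (σ i) = i) (hf : ∀ i, σ i ≠ i)
  {a b : Fin m} (hab : a ≠ b) (hub : σ a ≠ b)

include h2 hf hab hub

lemma class_pres_surg (α β : Perm (Fin m)) (hσm : σ ∈ grp α β)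
    (hclass : mkq α β a = mkq α β b) :
    ∀ x, mkq α β (surg σ a b x) = mkq α β x := by
  intro x
  have hgen : ∀ z, mkq α β (σ z) = mkq α β z := fun z => mk_gen_apply α β hσm z
  by_cases hxa : x = a
  · subst hxa; rw [surg_apply_a hf hab]; exact hclass.symm
  by_cases hxb : x = b
  · subst hxb; rw [surg_apply_b h2 hf hab]; exact hclass
  by_cases hxu : x = σ a
  · subst hxu
    rw [surg_apply_u h2 hf hab hub]
    calc mkq α β (σ b) = mkq α β b := hgen b
      _ = mkq α β a := hclass.symm
      _ = mkq α β (σ a) := (hgen a).symm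
  by_cases hxv : x = σ b
  · subst hxv
    rw [surg_apply_v h2 hf hab hub]
    calc mkq α β (σ a) = mkq α β a := hgen a
      _ = mkq α β b := hclass
      _ = mkq α β (σ b) := (hgen b).symm
  · rw [surg_apply_other h2 hxa hxb hxu hxv]; exact hgen x

lemma merge_pres_sigma (α β : Perm (Fin m)) (hm : surg σ a b ∈ grp α β) :
    ∀ x, merge (mkq α β a) (mkq α β (σ a)) (mkq α β (σ x)) =
      merge (mkq α β a) (mkq α β (σ a)) (mkq α β x) := by
  intro x
  have hgen : ∀ z, mkq α β (surg σ a b z) = mkq α β z := fun z => mk_gen_apply α β hm z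
  have hba : mkq α β b = mkq α β a := by
    rw [← surg_apply_a (σ := σ) hf hab]
    exact hgen a
  have hvu : mkq α β (σ b) = mkq α β (σ a) := by
    rw [← surg_apply_u h2 hf hab hub]
    exact hgen (σ a)
  by_cases hxa : x = a
  · subst hxa; rw [merge_right, merge_left]
  by_cases hxb : x = b
  · subst hxb; rw [hvu, hba, merge_right, merge_left]
  by_cases hxu : x = σ a
  · subst hxu; rw [h2, merge_left, merge_right]
  by_cases hxv : x = σ b
  · subst hxv; rw [h2, hba, hvu, merge_left, merge_right]
  · have hx : σ x = surg σ a b x := (surg_apply_other h2 hxa hxb hxu hxv).symm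
    rw [hx, hgen x]

lemma merge_pres_surg (α β : Perm (Fin m)) (hm : σ ∈ grp α β) :
    ∀ x, merge (mkq α β a) (mkq α β b) (mkq α β (surg σ a b x)) =
      merge (mkq α β a) (mkq α β b) (mkq α β x) := by
  intro x
  have hgen : ∀ z, mkq α β (σ z) = mkq α β z := fun z => mk_gen_apply α β hm z
  by_cases hxa : x = a
  · subst hxa; rw [surg_apply_a hf hab, merge_right, merge_left]
  by_cases hxb : x = b
  · subst hxb; rw [surg_apply_b h2 hf hab, merge_left, merge_right]
  by_cases hxu : x = σ a
  · subst hxu; rw [surg_apply_u h2 hf hab hub, hgen b, hgen a, merge_right, merge_left]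
  by_cases hxv : x = σ b
  · subst hxv; rw [surg_apply_v h2 hf hab hub, hgen a, hgen b, merge_left, merge_right]
  · rw [surg_apply_other h2 hxa hxb hxu hxv, hgen x]

lemma surg_bound_le (ρ : Perm (Fin m)) :
    numComponents (surg σ a b) ρ ≤ numComponents σ ρ + 1 := by
  rw [numComponents_eq, numComponents_eq]
  exact card_le_add_one σ ρ (surg σ a b) ρ a (σ a)
    (merge_pres_sigma h2 hf hab hub (surg σ a b) ρ (sigma_mem _ _))
    (fun x => congrArg _ (mk_gen_apply _ _ (tau_mem _ _) x))

lemma surg_bound_ge (ρ : Perm (Fin m)) :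
    numComponents σ ρ ≤ numComponents (surg σ a b) ρ + 1 := by
  rw [numComponents_eq, numComponents_eq]
  exact card_le_add_one (surg σ a b) ρ σ ρ a b
    (merge_pres_surg h2 hf hab hub σ ρ (sigma_mem _ _))
    (fun x => congrArg _ (mk_gen_apply _ _ (tau_mem _ _) x))

lemma surg_comps_eq (τ : Perm (Fin m)) (hτ2 : ∀ i, τ (τ i) = i) (hτab : τ a = b) :
    numComponents (surg σ a b) τ = numComponents σ τ + 1 := by
  refine le_antisymm (surg_bound_le h2 hf hab hub τ) ?_
  rw [numComponents_eq, numComponents_eq]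
  have hclass : mkq σ τ a = mkq σ τ b := by
    rw [← hτab]
    exact (mk_gen_apply σ τ (tau_mem σ τ) a).symm
  refine card_add_one_le (surg σ a b) τ σ τ
    (class_pres_surg h2 hf hab hub σ τ (sigma_mem σ τ) hclass)
    (fun x => mk_gen_apply σ τ (tau_mem σ τ) x)
    a (σ a) (mk_gen_apply σ τ (sigma_mem σ τ) a).symm ?_
  intro h
  have hr : σ a ∈ orbit ↥(grp (surg σ a b) τ) a := Quotient.eq''.mp h.symm
  have hinv1 : ∀ y : Fin m, y ∈ ({a, b} : Set (Fin m)) ↔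
      surg σ a b y ∈ ({a, b} : Set (Fin m)) := by
    intro y
    simp only [Set.mem_insert_iff, Set.mem_singleton_iff]
    constructor
    · rintro (rfl | rfl)
      · exact Or.inr (surg_apply_a hf hab)
      · exact Or.inl (surg_apply_b h2 hf hab)
    · rintro (hy | hy)
      · exact Or.inr (by rw [← surg_invol h2 y, hy, surg_apply_a hf hab])
      · exact Or.inl (by rw [← surg_invol h2 y, hy, surg_apply_b h2 hf hab])
  have hinv2 : ∀ y : Fin m, y ∈ ({a, b} : Set (Fin m)) ↔
      τ y ∈ ({a, b} : Set (Fin m)) := by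
    intro y
    simp only [Set.mem_insert_iff, Set.mem_singleton_iff]
    constructor
    · rintro (rfl | rfl)
      · exact Or.inr hτab
      · exact Or.inl (by rw [← hτab, hτ2])
    · rintro (hy | hy)
      · exact Or.inr (by rw [← hτ2 y, hy, hτab])
      · exact Or.inl (by rw [← hτ2 y, hy, ← hτab, hτ2])
  have hsub := orbit_subset_of_invariant (surg σ a b) τ {a, b} hinv1 hinv2
    (Or.inl rfl : a ∈ ({a, b} : Set (Fin m)))
  rcases hsub hr with h' | h'
  · exact hf a h'
  · exact hub h'

end surgcount

lemma surg_self {n : ℕ} {σ : Perm (Fin (2 * n))} (h2 : ∀ i, σ (σ i) = i)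
    (hf : ∀ i, σ i ≠ i) {a b : Fin (2 * n)} (hab : a ≠ b) (hub : σ a ≠ b) :
    numComponents σ (surg σ a b) + 1 = n := by
  have hle : numComponents σ (surg σ a b) ≤ n := comps_le _ _ hf
  have hne : numComponents σ (surg σ a b) ≠ n := by
    intro h
    exact surg_ne hf hab hub (eq_of_comps_eq σ (surg σ a b) h2 hf (surg_fpf hf) h)
  have hself : numComponents σ σ = n := comps_self σ h2 hf
  have hbound : numComponents σ σ ≤ numComponents σ (surg σ a b) + 1 := by
    rw [numComponents_eq, numComponents_eq]
    exact card_le_add_one σ (surg σ a b) σ σ a b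
      (fun x => congrArg _ (mk_gen_apply _ _ (sigma_mem _ _) x))
      (merge_pres_surg h2 hf hab hub σ σ (sigma_mem _ _))
  omega


lemma squeeze (f : ℕ → ℕ) (k n : ℕ) (h0 : f 0 = n) (hk : f k + k = n)
    (hstep : ∀ i < k, f i ≤ f (i + 1) + 1 ∧ f (i + 1) ≤ f i + 1) :
    ∀ i ≤ k, f i + i = n := by
  have down : ∀ i ≤ k, n ≤ f i + i := by
    intro i
    induction i with
    | zero => intro _; omega
    | succ j ih =>
      intro hj
      have h1 := ih (le_of_lt (Nat.lt_of_succ_le hj))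
      have h2 := (hstep j (Nat.lt_of_succ_le hj)).1
      omega
  have up : ∀ j, ∀ i, i + j = k → f i + i ≤ n := by
    intro j
    induction j with
    | zero =>
      intro i hi
      have : i = k := by omega
      subst this
      omega
    | succ j ih =>
      intro i hi
      have h3 := ih (i + 1) (by omega)
      have h1 := (hstep i (by omega)).1
      omega
  intro i hi
  have hd := down i hi
  have hu := up (k - i) i (by omega)
  omega

lemma main_aux {n : ℕ} (k : ℕ) (τ : Perm (Fin (2 * n))) (hτ : IsCrossinglessMatching τ) :
    ∀ σ : Perm (Fin (2 * n)), IsCrossinglessMatching σ → numComponents σ τ + k = n →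
    ∃ p : ℕ → Perm (Fin (2 * n)), p 0 = σ ∧ p k = τ ∧
      (∀ i ≤ k, IsCrossinglessMatching (p i)) ∧
      (∀ i < k, numComponents (p i) (p (i + 1)) + 1 = n) ∧
      (∀ i < k, ∀ ρ : Perm (Fin (2 * n)),
        numComponents (p i) ρ ≤ numComponents (p (i + 1)) ρ + 1 ∧
        numComponents (p (i + 1)) ρ ≤ numComponents (p i) ρ + 1) := by
  induction k with
  | zero =>
    intro σ hσ hc
    have hτσ : τ = σ := eq_of_comps_eq σ τ hσ.1 hσ.2.1 hτ.2.1 (by omega)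
    exact ⟨fun _ => σ, rfl, hτσ.symm, fun i _ => hσ,
      fun i hi => absurd hi (Nat.not_lt_zero i), fun i hi => absurd hi (Nat.not_lt_zero i)⟩
  | succ k ih =>
    intro σ hσ hc
    have hne : σ ≠ τ := by
      intro h
      subst h
      rw [comps_self σ hσ.1 hσ.2.1] at hc
      omega
    obtain ⟨a, b, hab, hτab, hub, hint⟩ := exists_min_arc hσ hτ hne
    have habne : a ≠ b := ne_of_lt hab
    have hσ' : IsCrossinglessMatching (surg σ a b) :=
      ⟨surg_invol hσ.1, surg_fpf hσ.2.1, surg_noncrossing hσ hτ hab hτab hub hint⟩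
    have hcount : numComponents (surg σ a b) τ = numComponents σ τ + 1 :=
      surg_comps_eq hσ.1 hσ.2.1 habne hub τ hτ.1 hτab
    obtain ⟨q, hq0, hqk, hqcr, hqadj, hqbd⟩ := ih (surg σ a b) hσ' (by omega)
    refine ⟨fun i => Nat.casesOn i σ (fun j => q j), rfl, hqk, ?_, ?_, ?_⟩
    · intro i hi
      cases i with
      | zero => exact hσ
      | succ j => exact hqcr j (by omega)
    · intro i hi
      cases i with
      | zero =>
        show numComponents σ (q 0) + 1 = n
        rw [hq0]
        exact surg_self hσ.1 hσ.2.1 habne hub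
      | succ j => exact hqadj j (by omega)
    · intro i hi ρ
      cases i with
      | zero =>
        show numComponents σ ρ ≤ numComponents (q 0) ρ + 1 ∧
          numComponents (q 0) ρ ≤ numComponents σ ρ + 1
        rw [hq0]
        exact ⟨surg_bound_ge hσ.1 hσ.2.1 habne hub ρ, surg_bound_le hσ.1 hσ.2.1 habne hub ρ⟩
      | succ j => exact hqbd j (by omega) ρ

end CM

/-- If crossingless matchings `σ, τ` of `2n` points meet in codimension `k`
(`c(σ,τ) = n - k`), there is an interpolating sequence `p 0 = σ, p 1, …, p k = τ` of
crossingless matchings such that `p i` and `p (i+1)` meet in codimension one, `p 0` and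
`p i` meet in codimension `i`, and `p i` and `p k` meet in codimension `k - i`. -/
theorem exists_interpolating_sequence {n k : ℕ} (σ τ : Equiv.Perm (Fin (2 * n)))
    (hσ : IsCrossinglessMatching σ) (hτ : IsCrossinglessMatching τ)
    (hk : numComponents σ τ + k = n) :
    ∃ p : ℕ → Equiv.Perm (Fin (2 * n)),
      p 0 = σ ∧ p k = τ ∧
      (∀ i ≤ k, IsCrossinglessMatching (p i)) ∧
      (∀ i < k, numComponents (p i) (p (i + 1)) + 1 = n) ∧
      (∀ i ≤ k, numComponents (p 0) (p i) + i = n) ∧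
      (∀ i ≤ k, numComponents (p i) (p k) + (k - i) = n) := by
  obtain ⟨p, hp0, hpk, hpcr, hpadj, hpbd⟩ := CM.main_aux k τ hτ σ hσ hk
  refine ⟨p, hp0, hpk, hpcr, hpadj, ?_, ?_⟩
  · have hsq := CM.squeeze (fun i => numComponents (p i) (p 0)) k n
      (by show numComponents (p 0) (p 0) = n; rw [hp0]; exact CM.comps_self σ hσ.1 hσ.2.1)
      (by show numComponents (p k) (p 0) + k = n; rw [hpk, hp0, CM.numComponents_comm]; exact hk)
      (fun i hi => hpbd i hi (p 0))
    intro i hi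
    rw [CM.numComponents_comm]
    exact hsq i hi
  · have hsq := CM.squeeze (fun i => numComponents (p (k - i)) (p k)) k n
      (by show numComponents (p (k - 0)) (p k) = n; rw [Nat.sub_zero, hpk]; exact CM.comps_self τ hτ.1 hτ.2.1)
      (by show numComponents (p (k - k)) (p k) + k = n; rw [Nat.sub_self, hp0, hpk]; exact hk)
      ?_
    · intro i hi
      have h : numComponents (p (k - (k - i))) (p k) + (k - i) = n := hsq (k - i) (by omega)
      rw [show k - (k - i) = i by omega] at h
      exact h
    · intro i hi
      have e1 : k - i = (k - (i + 1)) + 1 := by omega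
      have hb := hpbd (k - (i + 1)) (by omega) (p k)
      constructor
      · show numComponents (p (k - i)) (p k) ≤ numComponents (p (k - (i + 1))) (p k) + 1
        rw [e1]
        exact hb.2
      · show numComponents (p (k - (i + 1))) (p k) ≤ numComponents (p (k - i)) (p k) + 1
        rw [e1]
        exact hb.1
end
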